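/- arXiv:2304.13047 — 5 statements merged into one kernel-verified Lean document; each statement's English description precedes it below -/
import Mathlib

section
/- If a quotient of a directed cycle is a double tree, then each pair of parallel edges points in opposite directions: for every pair of parallel edges {e, e'} one has (tar(e), src(e)) = (src(e'), tar(e')). -/
open scoped BigOperators

/-- The multigraph with edge set `E`, vertex set `V`, and directions `src, tar` is a
double tree: no loops, every edge has multiplicity exactly two (counting parallel edges,
i.e. edges with the same unordered pair of endpoints), and the underlying simple graph
is a tree. -/
def IsDoubleTree {V E : Type*} [Fintype V] [Fintype E] [DecidableEq V] [DecidableEq E]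
    (src tar : E → V) : Prop :=
  (∀ e, src e ≠ tar e) ∧
  (∀ e, (Finset.univ.filter fun e' =>
      ({src e', tar e'} : Finset V) = {src e, tar e}).card = 2) ∧
  (SimpleGraph.mk (fun a b => a ≠ b ∧ ∃ e, ({src e, tar e} : Finset V) = {a, b})
    ⟨fun a b h => ⟨h.1.symm, h.2.choose, by rw [h.2.choose_spec, Finset.pair_comm]⟩⟩
    ⟨fun a h => h.1 rfl⟩).IsTree

lemma aux_main (d : ℕ) (α : Type) [Fintype α] [DecidableEq α]
    (q : Fin (d + 1) → α) (G : SimpleGraph α)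
    (hAdj : ∀ x y, G.Adj x y ↔ x ≠ y ∧ ∃ t : Fin (d + 1), ({q t, q (t - 1)} : Finset α) = {x, y})
    (hloop : ∀ t : Fin (d + 1), q t ≠ q (t - 1))
    (hmult : ∀ t : Fin (d + 1), (Finset.univ.filter fun t' =>
      ({q t', q (t' - 1)} : Finset α) = {q t, q (t - 1)}).card = 2)
    (htree : G.IsTree) :
    ∀ e e' : Fin (d + 1), e ≠ e' →
      ({q e, q (e - 1)} : Finset α) = {q e', q (e' - 1)} →
      q (e - 1) = q e' ∧ q e = q (e' - 1) := by
  classical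
  intro e e' hne hpar
  set a := q e with ha
  set b := q (e - 1) with hb
  have hab : a ≠ b := hloop e
  -- the key claim: it is impossible that q e' = a and q (e' - 1) = b
  have hkey : ¬ (q e' = a ∧ q (e' - 1) = b) := by
    rintro ⟨h1, h2⟩
    -- bridge
    have hadj : G.Adj a b := (hAdj a b).mpr ⟨hab, e, rfl⟩
    have hbridge := (SimpleGraph.isAcyclic_iff_forall_adj_isBridge.mp htree.2) hadj
    rw [SimpleGraph.isBridge_iff] at hbridge
    set H := G \ SimpleGraph.fromEdgeSet {s(a, b)} with hH
    have hnr : ¬ H.Reachable a b := hbridge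
    set χ : α → ℤ := fun x => if H.Reachable a x then 1 else 0 with hχ
    set F : Fin (d + 1) → ℤ := fun t => χ (q t) - χ (q (t - 1)) with hF
    have hsum : ∑ t, F t = 0 := by
      rw [Finset.sum_sub_distrib, sub_eq_zero]
      exact Fintype.sum_equiv (Equiv.addRight (1 : Fin (d + 1)))
        (fun t => χ (q t)) (fun t => χ (q (t - 1)))
        (fun t => by simp only [Equiv.coe_addRight]; rw [add_sub_cancel_right])
    have hvan : ∀ t, t ≠ e → t ≠ e' → F t = 0 := by
      intro t ht ht'
      have hne_pair : ({q t, q (t - 1)} : Finset α) ≠ {a, b} := by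
        intro hEq
        have hsub : ({e, e', t} : Finset (Fin (d + 1))) ⊆
            Finset.univ.filter (fun t' => ({q t', q (t' - 1)} : Finset α) = {a, b}) := by
          intro x hx
          simp only [Finset.mem_insert, Finset.mem_singleton] at hx
          rcases hx with rfl | rfl | rfl <;>
            simp only [Finset.mem_filter, Finset.mem_univ, true_and] <;>
            first
            | rfl
            | exact hpar.symm
            | exact hEq
        have hcard : ({e, e', t} : Finset (Fin (d + 1))).card = 3 := by
          rw [Finset.card_insert_of_notMem, Finset.card_insert_of_notMem,
            Finset.card_singleton]
          · simpa using ht'.symm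
          · simp [hne, ht.symm]
        have := Finset.card_le_card hsub
        rw [hcard, hmult e] at this
        omega
      have hadj2 : H.Adj (q t) (q (t - 1)) := by
        have hG : G.Adj (q t) (q (t - 1)) := (hAdj _ _).mpr ⟨hloop t, t, rfl⟩
        rw [hH]
        simp only [SimpleGraph.sdiff_adj, SimpleGraph.fromEdgeSet_adj, Set.mem_singleton_iff]
        refine ⟨hG, fun hc => ?_⟩
        apply hne_pair
        rcases (Sym2.eq_iff.mp hc.1) with ⟨h1, h2⟩ | ⟨h1, h2⟩
        · rw [h1, h2]
        · rw [h1, h2, Finset.pair_comm]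
      have hiff : H.Reachable a (q t) ↔ H.Reachable a (q (t - 1)) :=
        ⟨fun hh => hh.trans hadj2.reachable, fun hh => hh.trans hadj2.symm.reachable⟩
      simp only [hF, hχ, sub_eq_zero]
      exact if_congr hiff rfl rfl
    have hdecomp : F e + F e' = 0 := by
      rw [← Finset.sum_pair hne, ← hsum]
      refine Finset.sum_subset (Finset.subset_univ _) (fun t _ hts => ?_)
      simp only [Finset.mem_insert, Finset.mem_singleton, not_or] at hts
      exact hvan t hts.1 hts.2
    have hFe : F e = 1 := by
      simp only [hF, hχ, ← ha, ← hb]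
      rw [if_pos (SimpleGraph.Reachable.refl a), if_neg hnr]
      norm_num
    have hFe' : F e' = 1 := by
      simp only [hF, hχ, h1, h2]
      rw [if_pos (SimpleGraph.Reachable.refl a), if_neg hnr]
      norm_num
    rw [hFe, hFe'] at hdecomp
    omega
  -- now derive the disjunction from the pair equality
  have hmem : q e' ∈ ({a, b} : Finset α) := by
    rw [hpar]; exact Finset.mem_insert_self _ _
  have hmem2 : b ∈ ({q e', q (e' - 1)} : Finset α) := by
    rw [← hpar]; exact Finset.mem_insert_of_mem (Finset.mem_singleton_self _)
  have hmem3 : a ∈ ({q e', q (e' - 1)} : Finset α) := by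
    rw [← hpar]; exact Finset.mem_insert_self _ _
  simp only [Finset.mem_insert, Finset.mem_singleton] at hmem hmem2 hmem3
  rcases hmem with h1 | h1
  · rcases hmem2 with h2 | h2
    · exact absurd (h2.trans h1).symm hab
    · exact absurd ⟨h1, h2.symm⟩ hkey
  · rcases hmem3 with h2 | h2
    · exact absurd (h2.trans h1) hab
    · exact ⟨h1.symm, h2⟩

/-- If a quotient of the directed cycle (vertices `u_t`, edges `e_t` from `u_t` to
`u_{t-1}` mod `d`, quotient map `q`) is a double tree, then every pair of parallel
edges points in opposite directions. -/
theorem cycle_quotient_double_tree_opposite (d : ℕ) (α : Type) [Fintype α] [DecidableEq α]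
    (q : Fin (d + 1) → α)
    (h : IsDoubleTree (fun t : Fin (d + 1) => q t) (fun t : Fin (d + 1) => q (t - 1))) :
    ∀ e e' : Fin (d + 1), e ≠ e' →
      ({q e, q (e - 1)} : Finset α) = {q e', q (e' - 1)} →
      q (e - 1) = q e' ∧ q e = q (e' - 1) := by
  obtain ⟨hloop, hmult, htree⟩ := h
  exact aux_main d α q _ (fun x y => Iff.rfl) hloop hmult htree
end

section
/- Let (V,F) be a finite tree with a distinguished root vertex v₀, and suppose each edge f ∈ F carries a symmetric N×N (0,1)-matrix B_f with every row sum equal to ξ_f. Then the number of injective maps Ψ : V∖{v₀} → [N]∖{i₀} extending Ψ(v₀) = i₀ such that B_f(Ψ(u), Ψ(w)) = 1 for every edge f = {u,w} ∈ F satisfies ∏_{f∈F}(ξ_f − #V) ≤ #{Ψ} ≤ ∏_{f∈F} ξ_f, provided ξ_f ≥ #V for all f. -/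
namespace TreeCountAux

open SimpleGraph Finset


variable {V : Type} [DecidableEq V] {G : SimpleGraph V}

lemma exists_shortest (hc : G.Connected) (a b : V) :
    ∃ p : G.Walk a b, p.IsPath ∧ p.length = G.dist a b := by
  obtain ⟨p, hp⟩ := hc.exists_walk_length_eq_dist a b
  exact ⟨p.bypass, p.bypass_isPath,
    le_antisymm (hp ▸ p.length_bypass_le) (SimpleGraph.dist_le _)⟩

lemma endpoint_of_dist {a b x : V} (p : G.Walk a b) (h : x ∈ p.support)
    (hx : p.length ≤ G.dist a x) : x = b := by
  have h1 : G.dist a x ≤ (p.takeUntil x h).length := SimpleGraph.dist_le _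
  have h2 : (p.takeUntil x h).length + (p.dropUntil x h).length = p.length := by
    rw [← SimpleGraph.Walk.length_append, SimpleGraph.Walk.take_spec]
  have h3 : (p.dropUntil x h).length = 0 := by omega
  exact SimpleGraph.Walk.eq_of_length_eq_zero h3

lemma not_mem_support {a b x : V} (p : G.Walk a b) (hlt : p.length < G.dist a x) :
    x ∉ p.support := by
  intro h
  have h1 : G.dist a x ≤ (p.takeUntil x h).length := SimpleGraph.dist_le _
  have h2 := SimpleGraph.Walk.length_takeUntil_le p h
  omega

lemma isPath_concat {a b c : V} {p : G.Walk a b} (hp : p.IsPath) (hnb : c ∉ p.support)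
    (h : G.Adj b c) : (p.concat h).IsPath := by
  rw [← SimpleGraph.Walk.isPath_reverse_iff, SimpleGraph.Walk.reverse_concat]
  exact hp.reverse.cons (by simpa [SimpleGraph.Walk.support_reverse] using hnb)

lemma dist_adj (hc : G.Connected) (v₀ : V) {x v : V} (h : G.Adj x v) :
    G.dist v₀ v ≤ G.dist v₀ x + 1 := by
  obtain ⟨q, _, hql⟩ := exists_shortest hc v₀ x
  have := SimpleGraph.dist_le (q.concat h)
  rwa [SimpleGraph.Walk.length_concat, hql] at this

lemma adj_dist_aux (hG : G.IsTree) (v₀ : V) {u v : V} (h : G.Adj u v)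
    (hle : G.dist v₀ u ≤ G.dist v₀ v) : G.dist v₀ v = G.dist v₀ u + 1 := by
  obtain ⟨q, hq, hql⟩ := exists_shortest hG.isConnected v₀ u
  have hub : G.dist v₀ v ≤ G.dist v₀ u + 1 := dist_adj hG.isConnected v₀ h
  rcases Nat.lt_or_ge (G.dist v₀ u) (G.dist v₀ v) with hlt | hge
  · omega
  have heq : G.dist v₀ u = G.dist v₀ v := le_antisymm hle hge
  by_cases hmem : v ∈ q.support
  · exact absurd (endpoint_of_dist q hmem (by omega)) (Ne.symm h.ne)
  · obtain ⟨pp, hpp, hppl⟩ := exists_shortest hG.isConnected v₀ v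
    have hr : (q.concat h).IsPath := isPath_concat hq hmem h
    have heqp := (hG.existsUnique_path v₀ v).unique hpp hr
    have := congrArg SimpleGraph.Walk.length heqp
    rw [hppl, SimpleGraph.Walk.length_concat, hql] at this
    omega

lemma adj_dist_ne (hG : G.IsTree) (v₀ : V) {u v : V} (h : G.Adj u v) :
    G.dist v₀ u ≠ G.dist v₀ v := by
  intro he
  have := adj_dist_aux hG v₀ h he.le
  omega

lemma exists_parent (hG : G.IsTree) (v₀ : V) {v : V} (hv : v ≠ v₀) :
    ∃ u, G.Adj u v ∧ G.dist v₀ u + 1 = G.dist v₀ v := by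
  obtain ⟨q, hq, hql⟩ := exists_shortest hG.isConnected v v₀
  cases q with
  | nil => exact absurd rfl hv
  | @cons _ x _ h q' =>
    refine ⟨x, h.symm, ?_⟩
    have h1 : G.dist v₀ x ≤ q'.length := by
      have h0 := SimpleGraph.dist_le q'.reverse
      have hc : G.dist v₀ x = G.dist x v₀ := SimpleGraph.dist_comm
      rw [SimpleGraph.Walk.length_reverse] at h0
      omega
    have h2 : G.dist v₀ v ≤ G.dist v₀ x + 1 := dist_adj hG.isConnected v₀ h.symm
    have h3 : (SimpleGraph.Walk.cons h q').length = q'.length + 1 := by simp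
    have hc2 : G.dist v v₀ = G.dist v₀ v := SimpleGraph.dist_comm
    rw [h3] at hql
    have h4 : 0 < G.dist v₀ v := hG.isConnected.pos_dist_of_ne (Ne.symm hv)
    omega

lemma parent_unique (hG : G.IsTree) (v₀ : V) {v u₁ u₂ : V}
    (h₁ : G.Adj u₁ v) (hd₁ : G.dist v₀ u₁ + 1 = G.dist v₀ v)
    (h₂ : G.Adj u₂ v) (hd₂ : G.dist v₀ u₂ + 1 = G.dist v₀ v) : u₁ = u₂ := by
  obtain ⟨q₁, hq₁, hl₁⟩ := exists_shortest hG.isConnected v₀ u₁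
  obtain ⟨q₂, hq₂, hl₂⟩ := exists_shortest hG.isConnected v₀ u₂
  have hm₁ : v ∉ q₁.support := not_mem_support _ (by omega)
  have hm₂ : v ∉ q₂.support := not_mem_support _ (by omega)
  have hr₁ : (q₁.concat h₁).IsPath := isPath_concat hq₁ hm₁ h₁
  have hr₂ : (q₂.concat h₂).IsPath := isPath_concat hq₂ hm₂ h₂
  have heq := (hG.existsUnique_path v₀ v).unique hr₁ hr₂
  have hmem : u₂ ∈ (q₁.concat h₁).support := by
    rw [heq, SimpleGraph.Walk.support_concat]
    simp only [List.concat_eq_append, List.mem_append]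
    exact Or.inl q₂.end_mem_support
  rw [SimpleGraph.Walk.support_concat] at hmem
  simp only [List.concat_eq_append, List.mem_append, List.mem_singleton] at hmem
  rcases hmem with hmem | hmem
  · exact (endpoint_of_dist q₁ hmem (by omega)).symm
  · exact absurd hmem h₂.ne

open Classical in
noncomputable def cnt (N : ℕ) {V : Type} [Fintype V] [DecidableEq V]
    (G : SimpleGraph V) (v₀ : V) (i₀ : Fin N)
    (B : Sym2 V → Matrix (Fin N) (Fin N) ℝ) (S : Finset V) : Finset (V → Fin N) :=
  Finset.univ.filter fun Ψ =>
    (∀ v ∉ S, Ψ v = i₀) ∧ Set.InjOn Ψ ↑S ∧ Ψ v₀ = i₀ ∧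
      ∀ u w, u ∈ S → w ∈ S → G.Adj u w → B s(u, w) (Ψ u) (Ψ w) = 1

lemma mem_cnt {N : ℕ} {V : Type} [Fintype V] [DecidableEq V]
    {G : SimpleGraph V} {v₀ : V} {i₀ : Fin N}
    {B : Sym2 V → Matrix (Fin N) (Fin N) ℝ} {S : Finset V} {Ψ : V → Fin N} :
    Ψ ∈ cnt N G v₀ i₀ B S ↔
      (∀ v ∉ S, Ψ v = i₀) ∧ Set.InjOn Ψ ↑S ∧ Ψ v₀ = i₀ ∧
      ∀ u w, u ∈ S → w ∈ S → G.Adj u w → B s(u, w) (Ψ u) (Ψ w) = 1 := by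
  simp [cnt]

lemma step_card (N : ℕ) {V : Type} [Fintype V] [DecidableEq V]
    {G : SimpleGraph V} [DecidableRel G.Adj] (v₀ : V) (i₀ : Fin N)
    (B : Sym2 V → Matrix (Fin N) (Fin N) ℝ) (ξ : Sym2 V → ℕ)
    (hsym : ∀ f ∈ G.edgeFinset, (B f).IsSymm)
    (h01 : ∀ f ∈ G.edgeFinset, ∀ i j, B f i j = 0 ∨ B f i j = 1)
    (hrow : ∀ f ∈ G.edgeFinset, ∀ i, ∑ j, B f i j = (ξ f : ℝ))
    (S : Finset V) (v p : V) (hv : v ∉ S) (hv₀ : v₀ ∈ S) (hp : p ∈ S)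
    (hadj : G.Adj p v) (honly : ∀ u ∈ S, G.Adj u v → u = p) :
    (cnt N G v₀ i₀ B S).card * (ξ s(p,v) - Fintype.card V)
        ≤ (cnt N G v₀ i₀ B (insert v S)).card ∧
      (cnt N G v₀ i₀ B (insert v S)).card ≤ (cnt N G v₀ i₀ B S).card * ξ s(p,v) := by
  classical
  set f := s(p, v) with hf
  have hfE : f ∈ G.edgeFinset := by
    rw [SimpleGraph.mem_edgeFinset, SimpleGraph.mem_edgeSet]; exact hadj
  have hpv : p ≠ v := hadj.ne
  have hvv₀ : v₀ ≠ v := fun h => hv (h ▸ hv₀)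
  have hSne : ∀ u ∈ S, u ≠ v := fun u hu h => hv (h ▸ hu)
  -- count of ones in a row
  have hrowcard : ∀ i : Fin N, (Finset.univ.filter fun j => B f i j = 1).card = ξ f := by
    intro i
    have h1 : (∑ j, B f i j) = (ξ f : ℝ) := hrow f hfE i
    have h2 := Finset.sum_filter_add_sum_filter_not Finset.univ (fun j => B f i j = 1)
      (fun j => B f i j)
    have h3 : ∑ j ∈ Finset.univ.filter (fun j => B f i j = 1), B f i j
        = ((Finset.univ.filter fun j => B f i j = 1).card : ℝ) := by
      rw [Finset.sum_congr rfl (fun j hj => (Finset.mem_filter.1 hj).2), Finset.sum_const,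
        nsmul_eq_mul, mul_one]
    have h4 : ∑ j ∈ Finset.univ.filter (fun j => ¬ B f i j = 1), B f i j = 0 := by
      refine Finset.sum_eq_zero fun j hj => ?_
      rcases h01 f hfE i j with h | h
      · exact h
      · exact absurd h (Finset.mem_filter.1 hj).2
    have h5 : ((Finset.univ.filter fun j => B f i j = 1).card : ℝ) = (ξ f : ℝ) := by
      rw [← h1, ← h2, h3, h4, add_zero]
    exact_mod_cast h5
  -- restriction map
  have hmap : ∀ Φ ∈ cnt N G v₀ i₀ B (insert v S),
      Function.update Φ v i₀ ∈ cnt N G v₀ i₀ B S := by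
    intro Φ hΦ
    rw [mem_cnt] at hΦ ⊢
    obtain ⟨hout, hinj, hv0, hedge⟩ := hΦ
    have hupd : ∀ u ∈ S, Function.update Φ v i₀ u = Φ u := fun u hu =>
      Function.update_of_ne (hSne u hu) _ _
    refine ⟨?_, ?_, ?_, ?_⟩
    · intro w hw
      by_cases hwv : w = v
      · subst hwv; simp
      · rw [Function.update_of_ne hwv]
        exact hout w (by simp [hwv, hw])
    · intro a ha b hb hab
      have ha' : a ∈ S := ha
      have hb' : b ∈ S := hb
      rw [hupd a ha', hupd b hb'] at hab
      exact hinj (Finset.mem_coe.2 (Finset.mem_insert_of_mem ha'))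
        (Finset.mem_coe.2 (Finset.mem_insert_of_mem hb')) hab
    · rw [hupd v₀ hv₀]; exact hv0
    · intro a b ha hb hab
      rw [hupd a ha, hupd b hb]
      exact hedge a b (Finset.mem_insert_of_mem ha) (Finset.mem_insert_of_mem hb) hab
  have hcard : (cnt N G v₀ i₀ B (insert v S)).card
      = ∑ Ψ ∈ cnt N G v₀ i₀ B S,
          ((cnt N G v₀ i₀ B (insert v S)).filter fun Φ => Function.update Φ v i₀ = Ψ).card :=
    Finset.card_eq_sum_card_fiberwise hmap
  -- fiber description
  have hfib : ∀ Ψ ∈ cnt N G v₀ i₀ B S,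
      ((cnt N G v₀ i₀ B (insert v S)).filter fun Φ => Function.update Φ v i₀ = Ψ).card
        = ((Finset.univ.filter fun j => B f (Ψ p) j = 1) \ S.image Ψ).card := by
    intro Ψ hΨ
    have hΨ' := mem_cnt.1 hΨ
    obtain ⟨hout, hinj, hv0, hedge⟩ := hΨ'
    have hΨv : Ψ v = i₀ := hout v hv
    refine Finset.card_bij' (fun Φ _ => Φ v) (fun j _ => Function.update Ψ v j) ?_ ?_ ?_ ?_
    · -- forward membership
      intro Φ hΦ
      obtain ⟨hΦm, hup⟩ := Finset.mem_filter.1 hΦ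
      obtain ⟨hout', hinj', hv0', hedge'⟩ := mem_cnt.1 hΦm
      have hΨΦ : ∀ u ∈ S, Ψ u = Φ u := by
        intro u hu
        rw [← hup, Function.update_of_ne (hSne u hu)]
      rw [Finset.mem_sdiff, Finset.mem_filter]
      refine ⟨⟨Finset.mem_univ _, ?_⟩, ?_⟩
      · rw [hΨΦ p hp]
        exact hedge' p v (Finset.mem_insert_of_mem hp) (Finset.mem_insert_self v S) hadj
      · intro hmem
        obtain ⟨u, hu, hequ⟩ := Finset.mem_image.1 hmem
        rw [hΨΦ u hu] at hequ
        have : u = v := hinj' (Finset.mem_coe.2 (Finset.mem_insert_of_mem hu))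
          (Finset.mem_coe.2 (Finset.mem_insert_self v S)) hequ
        exact hv (this ▸ hu)
    · -- backward membership
      intro j hj
      rw [Finset.mem_sdiff, Finset.mem_filter] at hj
      obtain ⟨⟨-, hBj⟩, hjim⟩ := hj
      have hjS : ∀ u ∈ S, Ψ u ≠ j := by
        intro u hu h
        exact hjim (Finset.mem_image.2 ⟨u, hu, h⟩)
      rw [Finset.mem_filter, mem_cnt]
      have hupdS : ∀ u ∈ S, Function.update Ψ v j u = Ψ u := fun u hu =>
        Function.update_of_ne (hSne u hu) _ _
      refine ⟨⟨?_, ?_, ?_, ?_⟩, ?_⟩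
      · intro w hw
        have hwv : w ≠ v := fun h => hw (h ▸ Finset.mem_insert_self v S)
        have hwS : w ∉ S := fun h => hw (Finset.mem_insert_of_mem h)
        rw [Function.update_of_ne hwv]
        exact hout w hwS
      · intro a ha b hb hab
        have ha' : a ∈ insert v S := ha
        have hb' : b ∈ insert v S := hb
        rcases Finset.mem_insert.1 ha' with rfl | haS <;>
          rcases Finset.mem_insert.1 hb' with rfl | hbS
        · rfl
        · rw [Function.update_self, hupdS b hbS] at hab
          exact absurd hab.symm (hjS b hbS)
        · rw [Function.update_self, hupdS a haS] at hab
          exact absurd hab (hjS a haS)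
        · rw [hupdS a haS, hupdS b hbS] at hab
          exact hinj (Finset.mem_coe.2 haS) (Finset.mem_coe.2 hbS) hab
      · rw [hupdS v₀ hv₀]; exact hv0
      · intro a b ha hb hab
        have hane : a ≠ b := hab.ne
        rcases Finset.mem_insert.1 ha with rfl | haS <;>
          rcases Finset.mem_insert.1 hb with rfl | hbS
        · exact absurd rfl hane
        · -- a = v, b ∈ S : b = p
          have hbp : b = p := honly b hbS hab.symm
          subst hbp
          rw [Function.update_self, hupdS b hbS]
          have hswap : s(a, b) = f := by rw [hf]; exact Sym2.eq_swap
          rw [hswap]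
          rw [(hsym f hfE).apply]
          exact hBj
        · -- b = v, a ∈ S : a = p
          have hap : a = p := honly a haS hab
          subst hap
          rw [Function.update_self, hupdS a haS]
          exact hBj
        · rw [hupdS a haS, hupdS b hbS]
          exact hedge a b haS hbS hab
      · -- fiber condition
        rw [Function.update_idem]
        conv_lhs => rw [← hΨv]
        exact Function.update_eq_self v Ψ
    · -- left inverse
      intro Φ hΦ
      obtain ⟨-, hup⟩ := Finset.mem_filter.1 hΦ
      rw [← hup, Function.update_idem, Function.update_eq_self]
    · -- right inverse
      intro j hj
      exact Function.update_self _ _ _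
  -- bounds on each fiber
  have hub : ∀ Ψ ∈ cnt N G v₀ i₀ B S,
      ((Finset.univ.filter fun j => B f (Ψ p) j = 1) \ S.image Ψ).card ≤ ξ f := by
    intro Ψ _
    calc ((Finset.univ.filter fun j => B f (Ψ p) j = 1) \ S.image Ψ).card
        ≤ (Finset.univ.filter fun j => B f (Ψ p) j = 1).card :=
          Finset.card_le_card (Finset.sdiff_subset)
      _ = ξ f := hrowcard _
  have hlb : ∀ Ψ ∈ cnt N G v₀ i₀ B S,
      ξ f - Fintype.card V ≤
        ((Finset.univ.filter fun j => B f (Ψ p) j = 1) \ S.image Ψ).card := by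
    intro Ψ _
    have h1 := Finset.le_card_sdiff (S.image Ψ) (Finset.univ.filter fun j => B f (Ψ p) j = 1)
    have h2 : (S.image Ψ).card ≤ Fintype.card V :=
      le_trans (Finset.card_image_le) (Finset.card_le_univ S)
    have h3 := hrowcard (Ψ p)
    omega
  constructor
  · rw [hcard]
    calc (cnt N G v₀ i₀ B S).card * (ξ f - Fintype.card V)
        = ∑ _Ψ ∈ cnt N G v₀ i₀ B S, (ξ f - Fintype.card V) := by
          rw [Finset.sum_const, smul_eq_mul]
      _ ≤ ∑ Ψ ∈ cnt N G v₀ i₀ B S,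
            ((cnt N G v₀ i₀ B (insert v S)).filter fun Φ => Function.update Φ v i₀ = Ψ).card := by
          refine Finset.sum_le_sum fun Ψ hΨ => ?_
          rw [hfib Ψ hΨ]
          exact hlb Ψ hΨ
  · rw [hcard]
    calc ∑ Ψ ∈ cnt N G v₀ i₀ B S,
          ((cnt N G v₀ i₀ B (insert v S)).filter fun Φ => Function.update Φ v i₀ = Ψ).card
        ≤ ∑ Ψ ∈ cnt N G v₀ i₀ B S, ξ f := by
          refine Finset.sum_le_sum fun Ψ hΨ => ?_
          rw [hfib Ψ hΨ]
          exact hub Ψ hΨ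
      _ = (cnt N G v₀ i₀ B S).card * ξ f := by rw [Finset.sum_const, smul_eq_mul]

lemma main_aux (N : ℕ) {V : Type} [Fintype V] [DecidableEq V]
    {G : SimpleGraph V} [DecidableRel G.Adj] (hG : G.IsTree) (v₀ : V) (i₀ : Fin N)
    (B : Sym2 V → Matrix (Fin N) (Fin N) ℝ) (ξ : Sym2 V → ℕ)
    (hsym : ∀ f ∈ G.edgeFinset, (B f).IsSymm)
    (h01 : ∀ f ∈ G.edgeFinset, ∀ i j, B f i j = 0 ∨ B f i j = 1)
    (hrow : ∀ f ∈ G.edgeFinset, ∀ i, ∑ j, B f i j = (ξ f : ℝ)) :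
    ∀ k (S : Finset V), S.card ≤ k → v₀ ∈ S →
      (∀ x ∈ S, x ≠ v₀ → ∀ u, G.Adj u x → G.dist v₀ u + 1 = G.dist v₀ x → u ∈ S) →
      (∏ f ∈ G.edgeFinset.filter (· ∈ S.sym2), (ξ f - Fintype.card V))
          ≤ (cnt N G v₀ i₀ B S).card ∧
        (cnt N G v₀ i₀ B S).card ≤ ∏ f ∈ G.edgeFinset.filter (· ∈ S.sym2), ξ f := by
  intro k
  induction k with
  | zero =>
    intro S hc hv₀ _
    have := Finset.card_pos.2 ⟨v₀, hv₀⟩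
    omega
  | succ k ih =>
    intro S hcard hv₀ hclosed
    by_cases hS : S = {v₀}
    · subst hS
      have hE : G.edgeFinset.filter (· ∈ ({v₀} : Finset V).sym2) = ∅ := by
        rw [Finset.filter_eq_empty_iff]
        intro e he
        induction e using Sym2.ind with
        | _ a b =>
          intro hmem
          have ha : a = v₀ := by
            simpa using Finset.mem_sym2_iff.1 hmem a (Sym2.mem_mk_left a b)
          have hb : b = v₀ := by
            simpa using Finset.mem_sym2_iff.1 hmem b (Sym2.mem_mk_right a b)
          rw [SimpleGraph.mem_edgeFinset, SimpleGraph.mem_edgeSet] at he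
          subst ha; subst hb
          exact G.loopless.irrefl _ he
      have hcnt : cnt N G v₀ i₀ B {v₀} = {fun _ => i₀} := by
        ext Ψ
        rw [mem_cnt, Finset.mem_singleton]
        constructor
        · rintro ⟨hout, -, hv0, -⟩
          funext w
          by_cases hw : w = v₀
          · subst hw; exact hv0
          · exact hout w (by simp [hw])
        · rintro rfl
          refine ⟨fun _ _ => rfl, ?_, rfl, ?_⟩
          · intro a ha b hb _
            have ha' : a = v₀ := by simpa using ha
            have hb' : b = v₀ := by simpa using hb
            rw [ha', hb']
          · intro u w hu hw hadj
            have hu' : u = v₀ := Finset.mem_singleton.1 hu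
            have hw' : w = v₀ := Finset.mem_singleton.1 hw
            subst hu'; subst hw'
            exact absurd hadj (G.loopless.irrefl _)
      rw [hE, hcnt]
      simp
    · -- pick a vertex of maximal distance from v₀ among S \ {v₀}
      have hne : (S.erase v₀).Nonempty := by
        by_contra hemp
        rw [Finset.not_nonempty_iff_eq_empty] at hemp
        apply hS
        refine Finset.eq_singleton_iff_unique_mem.2 ⟨hv₀, ?_⟩
        intro x hx
        by_contra hxv
        have : x ∈ S.erase v₀ := Finset.mem_erase.2 ⟨hxv, hx⟩
        rw [hemp] at this
        exact absurd this (Finset.notMem_empty x)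
      obtain ⟨v, hvT, hvmax⟩ :=
        Finset.exists_max_image (S.erase v₀) (fun x => G.dist v₀ x) hne
      have hvS : v ∈ S := Finset.mem_of_mem_erase hvT
      have hvne : v ≠ v₀ := Finset.ne_of_mem_erase hvT
      obtain ⟨p, hpadj, hpd⟩ := exists_parent hG v₀ hvne
      have hpS : p ∈ S := hclosed v hvS hvne p hpadj hpd
      have hpv : p ≠ v := hpadj.ne
      set S' := S.erase v with hS'
      have hv' : v ∉ S' := Finset.notMem_erase v S
      have hv₀' : v₀ ∈ S' := Finset.mem_erase.2 ⟨Ne.symm hvne, hv₀⟩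
      have hpS' : p ∈ S' := Finset.mem_erase.2 ⟨hpv, hpS⟩
      have hins : insert v S' = S := Finset.insert_erase hvS
      have hclosed' : ∀ x ∈ S', x ≠ v₀ →
          ∀ u, G.Adj u x → G.dist v₀ u + 1 = G.dist v₀ x → u ∈ S' := by
        intro x hx hxv₀ u hadj hd
        have hxS : x ∈ S := Finset.mem_of_mem_erase hx
        have huS : u ∈ S := hclosed x hxS hxv₀ u hadj hd
        refine Finset.mem_erase.2 ⟨?_, huS⟩
        intro huv
        subst huv
        have hxx : G.dist v₀ x ≤ G.dist v₀ u :=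
          hvmax x (Finset.mem_erase.2 ⟨hxv₀, hxS⟩)
        omega
      have honly : ∀ u ∈ S', G.Adj u v → u = p := by
        intro u huS' hadjuv
        have huS : u ∈ S := Finset.mem_of_mem_erase huS'
        rcases Nat.lt_or_ge (G.dist v₀ u) (G.dist v₀ v) with hlt | hge
        · have hdd := adj_dist_aux hG v₀ hadjuv hlt.le
          exact parent_unique hG v₀ hadjuv (by omega) hpadj hpd
        · have hdd := adj_dist_aux hG v₀ hadjuv.symm hge
          have huv₀ : u ≠ v₀ := by
            intro h
            subst h
            rw [SimpleGraph.dist_self] at hdd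
            omega
          have := hvmax u (Finset.mem_erase.2 ⟨huv₀, huS⟩)
          omega
      have hcard' : S'.card ≤ k := by
        rw [hS', Finset.card_erase_of_mem hvS]
        omega
      obtain ⟨ihl, ihu⟩ := ih S' hcard' hv₀' hclosed'
      obtain ⟨stl, stu⟩ :=
        step_card N v₀ i₀ B ξ hsym h01 hrow S' v p hv' hv₀' hpS' hpadj honly
      have hfnot : s(p, v) ∉ G.edgeFinset.filter (· ∈ S'.sym2) := by
        intro h
        have h2 := (Finset.mem_filter.1 h).2
        rw [Finset.mem_sym2_iff] at h2
        exact hv' (h2 v (Sym2.mem_mk_right p v))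
      have hES : G.edgeFinset.filter (· ∈ S.sym2)
          = insert s(p, v) (G.edgeFinset.filter (· ∈ S'.sym2)) := by
        ext e
        induction e using Sym2.ind with
        | _ a b =>
          simp only [Finset.mem_filter, Finset.mem_insert, SimpleGraph.mem_edgeFinset,
            SimpleGraph.mem_edgeSet, Finset.mk_mem_sym2_iff]
          constructor
          · rintro ⟨hadj', ha, hb⟩
            by_cases hav : a = v
            · rw [hav] at hadj'
              have hbv : b ≠ v := Ne.symm hadj'.ne
              have hbS' : b ∈ S' := Finset.mem_erase.2 ⟨hbv, hb⟩
              have hbp : b = p := honly b hbS' hadj'.symm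
              left
              rw [hav, hbp]
              exact Sym2.eq_swap
            · by_cases hbv : b = v
              · rw [hbv] at hadj'
                have haS' : a ∈ S' := Finset.mem_erase.2 ⟨hav, ha⟩
                have hap : a = p := honly a haS' hadj'
                left
                rw [hbv, hap]
              · right
                exact ⟨hadj', Finset.mem_erase.2 ⟨hav, ha⟩,
                  Finset.mem_erase.2 ⟨hbv, hb⟩⟩
          · rintro (he | ⟨hadj', ha, hb⟩)
            · rw [Sym2.eq_iff] at he
              rcases he with ⟨rfl, rfl⟩ | ⟨rfl, rfl⟩
              · exact ⟨hpadj, hpS, hvS⟩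
              · exact ⟨hpadj.symm, hvS, hpS⟩
            · exact ⟨hadj', Finset.mem_of_mem_erase ha, Finset.mem_of_mem_erase hb⟩
      rw [hES, ← hins, Finset.prod_insert hfnot, Finset.prod_insert hfnot]
      constructor
      · calc (ξ s(p, v) - Fintype.card V)
              * ∏ f ∈ G.edgeFinset.filter (· ∈ S'.sym2), (ξ f - Fintype.card V)
            ≤ (ξ s(p, v) - Fintype.card V) * (cnt N G v₀ i₀ B S').card :=
              Nat.mul_le_mul_left _ ihl
          _ = (cnt N G v₀ i₀ B S').card * (ξ s(p, v) - Fintype.card V) := Nat.mul_comm _ _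
          _ ≤ (cnt N G v₀ i₀ B (insert v S')).card := stl
      · calc (cnt N G v₀ i₀ B (insert v S')).card
            ≤ (cnt N G v₀ i₀ B S').card * ξ s(p, v) := stu
          _ ≤ (∏ f ∈ G.edgeFinset.filter (· ∈ S'.sym2), ξ f) * ξ s(p, v) :=
              Nat.mul_le_mul_right _ ihu
          _ = ξ s(p, v) * ∏ f ∈ G.edgeFinset.filter (· ∈ S'.sym2), ξ f := Nat.mul_comm _ _


end TreeCountAux

open scoped BigOperators

/-- Counting tree-compatible injective maps: for a finite tree `(V, G)` rooted at `v₀`,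
with a symmetric `(0,1)`-matrix `B f` with all row sums `ξ f` attached to each edge `f`,
the number of injective maps `Ψ : V → [N]` with `Ψ v₀ = i₀` such that
`B f (Ψ u) (Ψ w) = 1` for every edge `f = {u, w}` is between `∏_f (ξ f − #V)` and
`∏_f ξ f`, provided `ξ f ≥ #V` for all edges `f`. -/
theorem tree_injective_map_count (N : ℕ) (V : Type) [Fintype V] [DecidableEq V]
    (G : SimpleGraph V) [DecidableRel G.Adj] (hG : G.IsTree) (v₀ : V) (i₀ : Fin N)
    (B : Sym2 V → Matrix (Fin N) (Fin N) ℝ) (ξ : Sym2 V → ℕ)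
    (hsym : ∀ f ∈ G.edgeFinset, (B f).IsSymm)
    (h01 : ∀ f ∈ G.edgeFinset, ∀ i j, B f i j = 0 ∨ B f i j = 1)
    (hrow : ∀ f ∈ G.edgeFinset, ∀ i, ∑ j, B f i j = (ξ f : ℝ))
    (hbig : ∀ f ∈ G.edgeFinset, Fintype.card V ≤ ξ f) :
    (∏ f ∈ G.edgeFinset, (ξ f - Fintype.card V)) ≤
      (Finset.univ.filter fun Ψ : V → Fin N =>
        Function.Injective Ψ ∧ Ψ v₀ = i₀ ∧
          ∀ u w : V, G.Adj u w → B s(u, w) (Ψ u) (Ψ w) = 1).card ∧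
    (Finset.univ.filter fun Ψ : V → Fin N =>
        Function.Injective Ψ ∧ Ψ v₀ = i₀ ∧
          ∀ u w : V, G.Adj u w → B s(u, w) (Ψ u) (Ψ w) = 1).card ≤
      ∏ f ∈ G.edgeFinset, ξ f := by
  classical
  have key := TreeCountAux.main_aux N hG v₀ i₀ B ξ hsym h01 hrow (Fintype.card V)
    Finset.univ (by rw [Finset.card_univ]) (Finset.mem_univ _)
    (fun _ _ _ u _ _ => Finset.mem_univ u)
  have hEuniv : G.edgeFinset.filter (· ∈ (Finset.univ : Finset V).sym2) = G.edgeFinset := by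
    refine Finset.filter_true_of_mem fun e _ => ?_
    rw [Finset.mem_sym2_iff]
    exact fun a _ => Finset.mem_univ a
  have hset : TreeCountAux.cnt N G v₀ i₀ B Finset.univ
      = Finset.univ.filter (fun Ψ : V → Fin N =>
          Function.Injective Ψ ∧ Ψ v₀ = i₀ ∧
            ∀ u w : V, G.Adj u w → B s(u, w) (Ψ u) (Ψ w) = 1) := by
    ext Ψ
    rw [TreeCountAux.mem_cnt, Finset.mem_filter]
    constructor
    · rintro ⟨-, hinj, hv0, hedge⟩
      refine ⟨Finset.mem_univ _, ?_, hv0,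
        fun u w h => hedge u w (Finset.mem_univ u) (Finset.mem_univ w) h⟩
      intro a b hab
      exact hinj (by simp) (by simp) hab
    · rintro ⟨-, hinj, hv0, hedge⟩
      exact ⟨fun x hx => absurd (Finset.mem_univ x) hx,
        fun a _ b _ hab => hinj hab, hv0, fun u w _ _ h => hedge u w h⟩
  rw [← hset, ← hEuniv]
  exact key
end

section
/- Let T be a disjoint union of r directed path graphs T_1,…,T_r where T_s has d_s edges, and let π be a partition of the vertex set such that (i) every non-loop edge class of the quotient T^π has multiplicity at least 2, and (ii) the edge-overlay equivalence relation on [r] induced by π has every class of size at least 2. Call a vertex outer if it is an endpoint of some path and inner otherwise, and for a block B of π write B ∈ π^{(a,≥b)} if B contains exactly a outer vertices and at least b inner vertices. Then #(π^{(1,≥1)})/2 + #(π^{(0,≥1)}) + r/2 ≤ (∑_{s=1}^r d_s)/2. -/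
open scoped BigOperators

section PathSetup

variable {r : ℕ} {d : Fin r → ℕ} {β : Type} [Fintype β] [DecidableEq β]

/-- The vertex set of the disjoint union of `r` directed paths, the `s`-th having
`d s` edges: the vertices of the `s`-th path are `v_0^{(s)}, …, v_{d s}^{(s)}`. -/
abbrev PathVertex (d : Fin r → ℕ) := Σ s : Fin r, Fin (d s + 1)

/-- The edge set: the `t`-th edge of the `s`-th path goes from `v_t^{(s)}` to
`v_{t-1}^{(s)}`. -/
abbrev PathEdge (d : Fin r → ℕ) := Σ s : Fin r, Fin (d s)

/-- Source of an edge. -/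
def psrc (e : PathEdge d) : PathVertex d := ⟨e.1, e.2.succ⟩

/-- Target of an edge. -/
def ptar (e : PathEdge d) : PathVertex d := ⟨e.1, e.2.castSucc⟩

/-- A vertex is outer if it is an endpoint of its path. -/
def IsOuter (v : PathVertex d) : Prop := v.2 = 0 ∨ v.2 = Fin.last (d v.1)

instance (v : PathVertex d) : Decidable (IsOuter v) := by unfold IsOuter; infer_instance

/-- The unordered pair of endpoint blocks of an edge under the quotient map `c`. -/
def epair (c : PathVertex d → β) (e : PathEdge d) : Finset β := {c (psrc e), c (ptar e)}

/-- The number of outer vertices in the block `b` of the partition induced by `c`. -/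
def nOut (c : PathVertex d → β) (b : β) : ℕ :=
  (Finset.univ.filter fun v : PathVertex d => c v = b ∧ IsOuter v).card

/-- The number of inner vertices in the block `b` of the partition induced by `c`. -/
def nIn (c : PathVertex d → β) (b : β) : ℕ :=
  (Finset.univ.filter fun v : PathVertex d => c v = b ∧ ¬ IsOuter v).card

/-- Paths `s` and `s'` have an edge overlay in the quotient by `c`. -/
def Overlay (c : PathVertex d → β) (s s' : Fin r) : Prop :=
  ∃ (t : Fin (d s)) (t' : Fin (d s')), epair c ⟨s, t⟩ = epair c ⟨s', t'⟩

end PathSetup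

namespace CCB
set_option linter.unusedSectionVars false

open Finset

variable {r : ℕ} {d : Fin r → ℕ} {β : Type} [Fintype β] [DecidableEq β]

lemma mem_epair {c : PathVertex d → β} {e : PathEdge d} {a : β} :
    a ∈ epair c e ↔ a = c (psrc e) ∨ a = c (ptar e) := by
  simp [epair]

lemma isOuter_iff {v : PathVertex d} : IsOuter v ↔ v.2.val = 0 ∨ v.2.val = d v.1 := by
  unfold IsOuter
  rw [Fin.ext_iff, Fin.ext_iff]
  simp [Fin.last]

lemma pv_eq_iff {s : Fin r} {i j : Fin (d s + 1)} :
    (⟨s, i⟩ : PathVertex d) = ⟨s, j⟩ ↔ i.val = j.val := by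
  simp [Fin.ext_iff]

lemma pv_fst_eq {s s' : Fin r} {i : Fin (d s + 1)} {j : Fin (d s' + 1)}
    (h : (⟨s, i⟩ : PathVertex d) = ⟨s', j⟩) : s = s' := congrArg Sigma.fst h

lemma pe_eq_iff {s : Fin r} {i j : Fin (d s)} :
    (⟨s, i⟩ : PathEdge d) = ⟨s, j⟩ ↔ i.val = j.val := by
  simp [Fin.ext_iff]

lemma inner_card (hd : ∀ s, 1 ≤ d s) :
    (Finset.univ.filter fun v : PathVertex d => ¬ IsOuter v).card + r = ∑ s, d s := by
  have h1 : (Finset.univ.filter fun v : PathVertex d => ¬ IsOuter v).card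
      = ∑ s, ((Finset.univ.filter fun i : Fin (d s + 1) => ¬ (i.val = 0 ∨ i.val = d s)).card) := by
    rw [Finset.card_eq_sum_card_fiberwise (f := Sigma.fst) (t := Finset.univ)
      (fun x _ => Finset.mem_univ _)]
    refine Finset.sum_congr rfl fun s _ => ?_
    have hset : ((Finset.univ.filter fun v : PathVertex d => ¬ IsOuter v).filter
        fun v => v.1 = s) = (Finset.univ.filter fun i : Fin (d s + 1) =>
          ¬ (i.val = 0 ∨ i.val = d s)).map
          ⟨fun i => ⟨s, i⟩, fun a b h => by simpa [Fin.ext_iff] using h⟩ := by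
      ext v
      simp only [Finset.mem_filter, Finset.mem_univ, true_and, Finset.mem_map,
        Function.Embedding.coeFn_mk]
      constructor
      · rintro ⟨hv, hs⟩
        obtain ⟨s', j⟩ := v
        cases hs
        exact ⟨j, by simpa [isOuter_iff] using hv, rfl⟩
      · rintro ⟨i, hi, rfl⟩
        exact ⟨by show ¬ IsOuter (⟨s, i⟩ : PathVertex d); rw [isOuter_iff]; exact hi, rfl⟩
    rw [hset, Finset.card_map]
  have h2 : ∀ s : Fin r, (Finset.univ.filter fun i : Fin (d s + 1) =>
      ¬ (i.val = 0 ∨ i.val = d s)).card = d s - 1 := by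
    intro s
    have : (Finset.univ.filter fun i : Fin (d s + 1) => (i.val = 0 ∨ i.val = d s)) =
        {(0 : Fin (d s + 1)), Fin.last (d s)} := by
      ext i
      simp only [Finset.mem_filter, Finset.mem_univ, true_and, Finset.mem_insert,
        Finset.mem_singleton, Fin.ext_iff, Fin.val_last, Fin.val_zero]
    rw [Finset.filter_not, Finset.card_sdiff_of_subset (Finset.filter_subset _ _), this]
    have hne : (0 : Fin (d s + 1)) ≠ Fin.last (d s) := by
      have := hd s
      simp only [ne_eq, Fin.ext_iff, Fin.last, Fin.val_zero]
      omega
    rw [Finset.card_insert_of_notMem (by simpa using hne), Finset.card_singleton]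
    simp
  have h3 : ∑ s, (Finset.univ.filter fun i : Fin (d s + 1) =>
      ¬ (i.val = 0 ∨ i.val = d s)).card = ∑ s, (d s - 1) :=
    Finset.sum_congr rfl fun s _ => h2 s
  have h4 : (r : ℕ) = ∑ _s : Fin r, 1 := by simp
  have h5 : (∑ s, (d s - 1)) + ∑ _s : Fin r, 1 = ∑ s, d s := by
    rw [← Finset.sum_add_distrib]
    exact Finset.sum_congr rfl fun s _ => by have := hd s; omega
  rw [h1, h3]
  omega

lemma sum_nIn (c : PathVertex d → β) :
    ∑ q, nIn c q = (Finset.univ.filter fun v : PathVertex d => ¬ IsOuter v).card := by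
  unfold nIn
  rw [Finset.card_eq_sum_card_fiberwise (f := c) (t := Finset.univ) (fun x _ => Finset.mem_univ _)]
  refine Finset.sum_congr rfl fun q _ => ?_
  rw [Finset.filter_filter]
  congr 1
  ext v
  simp [and_comm]

def wt (c : PathVertex d → β) (q : β) : ℕ :=
  (if nOut c q = 1 ∧ 1 ≤ nIn c q then 1 else 0) + 2 * (if nOut c q = 0 ∧ 1 ≤ nIn c q then 1 else 0)

lemma sum_wt (c : PathVertex d → β) :
    ∑ q, wt c q = (Finset.univ.filter fun q : β => nOut c q = 1 ∧ 1 ≤ nIn c q).card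
      + 2 * (Finset.univ.filter fun q : β => nOut c q = 0 ∧ 1 ≤ nIn c q).card := by
  unfold wt
  rw [Finset.sum_add_distrib, ← Finset.mul_sum]
  congr 1 <;> simp [Finset.sum_boole]

lemma singleton_fiber {c : PathVertex d → β} {b : β} (h0 : nOut c b = 0) (h1 : nIn c b = 1) :
    ∃ v : PathVertex d, ¬ IsOuter v ∧ c v = b ∧ ∀ x, c x = b → x = v := by
  obtain ⟨v, hv⟩ := Finset.card_eq_one.mp h1
  have hvmem : v ∈ Finset.univ.filter fun v : PathVertex d => c v = b ∧ ¬ IsOuter v := by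
    rw [hv]; exact Finset.mem_singleton_self v
  simp only [Finset.mem_filter, Finset.mem_univ, true_and] at hvmem
  refine ⟨v, hvmem.2, hvmem.1, fun x hx => ?_⟩
  by_cases hout : IsOuter x
  · exfalso
    have : x ∈ Finset.univ.filter fun v : PathVertex d => c v = b ∧ IsOuter v := by
      simp [hx, hout]
    rw [Finset.card_eq_zero.mp h0] at this
    simp at this
  · have : x ∈ Finset.univ.filter fun v : PathVertex d => c v = b ∧ ¬ IsOuter v := by
      simp [hx, hout]
    rw [hv] at this
    simpa using this


lemma pv_eq_iff' {v w : PathVertex d} : v = w ↔ v.1 = w.1 ∧ v.2.val = w.2.val := by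
  constructor
  · intro h; rw [h]; exact ⟨rfl, rfl⟩
  · obtain ⟨a, i⟩ := v
    obtain ⟨b, j⟩ := w
    rintro ⟨h1, h2⟩
    dsimp at h1 h2
    subst h1
    exact congrArg (Sigma.mk a) (Fin.ext h2)

lemma pe_eq_iff' {v w : PathEdge d} : v = w ↔ v.1 = w.1 ∧ v.2.val = w.2.val := by
  constructor
  · intro h; rw [h]; exact ⟨rfl, rfl⟩
  · obtain ⟨a, i⟩ := v
    obtain ⟨b, j⟩ := w
    rintro ⟨h1, h2⟩
    dsimp at h1 h2
    subst h1
    exact congrArg (Sigma.mk a) (Fin.ext h2)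

lemma psrc_eq {e : PathEdge d} {s : Fin r} {m : Fin (d s + 1)} (h : psrc e = ⟨s, m⟩) :
    e.1 = s ∧ e.2.val + 1 = m.val := by
  have h1 := (pv_eq_iff'.mp h).1
  have h2 := (pv_eq_iff'.mp h).2
  exact ⟨h1, by simpa [psrc] using h2⟩

lemma ptar_eq {e : PathEdge d} {s : Fin r} {m : Fin (d s + 1)} (h : ptar e = ⟨s, m⟩) :
    e.1 = s ∧ e.2.val = m.val := by
  have h1 := (pv_eq_iff'.mp h).1
  have h2 := (pv_eq_iff'.mp h).2
  exact ⟨h1, by simpa [ptar] using h2⟩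

/-- Generic cardinality-transfer along an injection missing exactly two points. -/
lemma card_transfer {γ δ : Type} [Fintype γ] [Fintype δ] [DecidableEq γ] [DecidableEq δ]
    (Φ : γ → δ) (hinj : Function.Injective Φ) (vt w : δ) (hvtw : vt ≠ w)
    (hmiss : ∀ x, Φ x ≠ vt ∧ Φ x ≠ w) (hsur : ∀ v, v ≠ vt → v ≠ w → ∃ x, Φ x = v)
    (P : δ → Prop) [DecidablePred P] :
    (Finset.univ.filter P).card =
      (Finset.univ.filter fun x => P (Φ x)).card
        + (if P vt then 1 else 0) + (if P w then 1 else 0) := by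
  have hsplit := Finset.card_filter_add_card_filter_not
    (s := Finset.univ.filter P) (p := fun v => v ≠ vt ∧ v ≠ w)
  rw [Finset.filter_filter, Finset.filter_filter] at hsplit
  have hmain : ((Finset.univ.filter fun v => P v ∧ (v ≠ vt ∧ v ≠ w))).card
      = (Finset.univ.filter fun x => P (Φ x)).card := by
    refine (Finset.card_bij (fun x _ => Φ x) ?_ ?_ ?_).symm
    · intro x hx
      simp only [Finset.mem_filter, Finset.mem_univ, true_and] at hx ⊢
      exact ⟨hx, (hmiss x).1, (hmiss x).2⟩
    · intro x _ y _ hxy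
      exact hinj hxy
    · intro v hv
      simp only [Finset.mem_filter, Finset.mem_univ, true_and] at hv
      obtain ⟨hPv, hv1, hv2⟩ := hv
      obtain ⟨x, hx⟩ := hsur v hv1 hv2
      refine ⟨x, ?_, hx⟩
      simp only [Finset.mem_filter, Finset.mem_univ, true_and, hx]
      exact hPv
  have hrest : ((Finset.univ.filter fun v => P v ∧ ¬(v ≠ vt ∧ v ≠ w))).card
      = (if P vt then 1 else 0) + (if P w then 1 else 0) := by
    have hset : (Finset.univ.filter fun v => P v ∧ ¬(v ≠ vt ∧ v ≠ w))
        = ({vt, w} : Finset δ).filter P := by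
      ext v
      simp only [Finset.mem_filter, Finset.mem_univ, true_and, not_and, not_not,
        Finset.mem_insert, Finset.mem_singleton]
      tauto
    rw [hset]
    by_cases hPvt : P vt <;> by_cases hPw : P w <;>
      simp [Finset.filter_insert, Finset.filter_singleton, hPvt, hPw,
        Finset.card_insert_of_notMem, hvtw]
  omega

/-! ### Surgery definitions -/

def wval (D t u : ℕ) : ℕ :=
  if u + 2 ≤ t then u else if u + 1 = t then (if t + 1 = D then t + 1 else t - 1) else u + 2

def eval' (t u : ℕ) : ℕ := if u + 2 ≤ t then u else u + 2

variable (d) in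
def phiV (s : Fin r) (t : ℕ) (h1t : 1 ≤ t) (h2t : t < d s)
    (x : PathVertex (Function.update d s (d s - 2))) : PathVertex d :=
  if h : x.1 = s then
    ⟨s, ⟨wval (d s) t x.2.val, by
      have hx := x.2.isLt
      have hupd : Function.update d s (d s - 2) x.1 + 1 = d s - 2 + 1 := by
        rw [h, Function.update_self]
      unfold wval; split_ifs <;> omega⟩⟩
  else ⟨x.1, ⟨x.2.val, by
      have hx := x.2.isLt
      have hupd : Function.update d s (d s - 2) x.1 + 1 = d x.1 + 1 := by
        rw [Function.update_of_ne h]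
      omega⟩⟩

variable (d) in
def eV (s : Fin r) (t : ℕ) (h1t : 1 ≤ t) (h2t : t < d s) (h3 : 3 ≤ d s)
    (f : PathEdge (Function.update d s (d s - 2))) : PathEdge d :=
  if h : f.1 = s then
    ⟨s, ⟨eval' t f.2.val, by
      have hx := f.2.isLt
      have hupd : Function.update d s (d s - 2) f.1 = d s - 2 := by
        rw [h, Function.update_self]
      unfold eval'; split_ifs <;> omega⟩⟩
  else ⟨f.1, ⟨f.2.val, by
      have hx := f.2.isLt
      have hupd : Function.update d s (d s - 2) f.1 = d f.1 := by
        rw [Function.update_of_ne h]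
      omega⟩⟩

lemma phiV_fst {s : Fin r} {t : ℕ} (h1t : 1 ≤ t) (h2t : t < d s)
    (x : PathVertex (Function.update d s (d s - 2))) : (phiV d s t h1t h2t x).1 = x.1 := by
  unfold phiV
  by_cases h : x.1 = s
  · rw [dif_pos h]; exact h.symm
  · rw [dif_neg h]

lemma phiV_val {s : Fin r} {t : ℕ} (h1t : 1 ≤ t) (h2t : t < d s)
    (x : PathVertex (Function.update d s (d s - 2))) :
    (phiV d s t h1t h2t x).2.val = if x.1 = s then wval (d s) t x.2.val else x.2.val := by
  unfold phiV
  by_cases h : x.1 = s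
  · rw [dif_pos h, if_pos h]
  · rw [dif_neg h, if_neg h]

lemma eV_fst {s : Fin r} {t : ℕ} (h1t : 1 ≤ t) (h2t : t < d s) (h3 : 3 ≤ d s)
    (f : PathEdge (Function.update d s (d s - 2))) : (eV d s t h1t h2t h3 f).1 = f.1 := by
  unfold eV
  by_cases h : f.1 = s
  · rw [dif_pos h]; exact h.symm
  · rw [dif_neg h]

lemma eV_val {s : Fin r} {t : ℕ} (h1t : 1 ≤ t) (h2t : t < d s) (h3 : 3 ≤ d s)
    (f : PathEdge (Function.update d s (d s - 2))) :
    (eV d s t h1t h2t h3 f).2.val = if f.1 = s then eval' t f.2.val else f.2.val := by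
  unfold eV
  by_cases h : f.1 = s
  · rw [dif_pos h, if_pos h]
  · rw [dif_neg h, if_neg h]

lemma nv_lt {s : Fin r} (x : PathVertex (Function.update d s (d s - 2)))
    (hx : x.1 = s) : x.2.val < d s - 2 + 1 := by
  have h := x.2.isLt
  have hupd : Function.update d s (d s - 2) x.1 + 1 = d s - 2 + 1 := by
    rw [hx, Function.update_self]
  omega

lemma nv_lt' {s : Fin r} (x : PathVertex (Function.update d s (d s - 2)))
    (hx : x.1 ≠ s) : x.2.val < d x.1 + 1 := by
  have h := x.2.isLt
  have hupd : Function.update d s (d s - 2) x.1 + 1 = d x.1 + 1 := by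
    rw [Function.update_of_ne hx]
  omega

lemma ne_lt {s : Fin r} (f : PathEdge (Function.update d s (d s - 2)))
    (hf : f.1 = s) : f.2.val < d s - 2 := by
  have h := f.2.isLt
  have hupd : Function.update d s (d s - 2) f.1 = d s - 2 := by
    rw [hf, Function.update_self]
  omega

lemma cv_congr {c : PathVertex d → β} {s : Fin r} {m m' : Fin (d s + 1)} (h : m.val = m'.val) :
    c ⟨s, m⟩ = c ⟨s, m'⟩ := congrArg c (pv_eq_iff'.mpr ⟨rfl, h⟩)

lemma psrc_mk {s : Fin r} {u : ℕ} {hu : u < d s} :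
    psrc (⟨s, ⟨u, hu⟩⟩ : PathEdge d) = ⟨s, ⟨u + 1, by omega⟩⟩ := pv_eq_iff'.mpr ⟨rfl, rfl⟩

lemma ptar_mk {s : Fin r} {u : ℕ} {hu : u < d s} :
    ptar (⟨s, ⟨u, hu⟩⟩ : PathEdge d) = ⟨s, ⟨u, by omega⟩⟩ := pv_eq_iff'.mpr ⟨rfl, rfl⟩

lemma psrc_fst {e : PathEdge d} : (psrc e).1 = e.1 := rfl

lemma ptar_fst {e : PathEdge d} : (ptar e).1 = e.1 := rfl

lemma psrc_val {e : PathEdge d} : (psrc e).2.val = e.2.val + 1 := rfl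

lemma ptar_val {e : PathEdge d} : (ptar e).2.val = e.2.val := rfl

lemma wt_le_nIn {c : PathVertex d → β} (hnobad : ∀ q, ¬ (nOut c q = 0 ∧ nIn c q = 1))
    (q : β) : wt c q ≤ nIn c q := by
  have h := hnobad q
  unfold wt
  split_ifs <;> omega

lemma bad_structure {c : PathVertex d → β}
    (hmult : ∀ e : PathEdge d, c (psrc e) ≠ c (ptar e) → ∃ e', e' ≠ e ∧ epair c e' = epair c e)
    {b : β} (h0 : nOut c b = 0) (h1 : nIn c b = 1) :
    ∃ (s : Fin r) (t : ℕ) (h1t : 1 ≤ t) (h2t : t < d s),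
      (∀ x, c x = b → x = ⟨s, ⟨t, Nat.lt_succ_of_lt h2t⟩⟩) ∧
      c ⟨s, ⟨t, Nat.lt_succ_of_lt h2t⟩⟩ = b ∧
      c ⟨s, ⟨t - 1, by omega⟩⟩ = c ⟨s, ⟨t + 1, by omega⟩⟩ := by
  obtain ⟨v, hvin, hvb, hfib⟩ := singleton_fiber h0 h1
  obtain ⟨s, i⟩ := v
  rw [isOuter_iff] at hvin
  push_neg at hvin
  dsimp only at hvin
  have hlt := i.isLt
  have h1t : 1 ≤ i.val := by omega
  have h2t : i.val < d s := by omega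
  have hieq : (⟨i.val, Nat.lt_succ_of_lt h2t⟩ : Fin (d s + 1)) = i := Fin.ext rfl
  refine ⟨s, i.val, h1t, h2t, by rw [hieq]; exact hfib, by rw [hieq]; exact hvb, ?_⟩
  -- use hmult on edge of index t - 1
  set t := i.val with ht
  have hta : t - 1 < d s := by omega
  set a : PathEdge d := ⟨s, ⟨t - 1, hta⟩⟩ with ha
  have hsrc : c (psrc a) = b := by
    rw [ha, psrc_mk]
    rw [show (⟨s, ⟨t - 1 + 1, by omega⟩⟩ : PathVertex d) = ⟨s, i⟩ from
      pv_eq_iff'.mpr ⟨rfl, by simp; omega⟩]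
    exact hvb
  have htarne : c (ptar a) ≠ b := by
    intro h
    have := hfib _ h
    rw [ha, ptar_mk] at this
    have := (pv_eq_iff'.mp this).2
    simp at this
    omega
  obtain ⟨e', hne, hep⟩ := hmult a (by rw [hsrc]; exact fun h => htarne h.symm)
  have hbmem : b ∈ epair c e' := by
    rw [hep, mem_epair]
    exact Or.inl hsrc.symm
  rw [mem_epair] at hbmem
  have he' : e' = ⟨s, ⟨t, h2t⟩⟩ := by
    rcases hbmem with h | h
    · have := hfib _ h.symm
      obtain ⟨hfst, hval⟩ := psrc_eq this
      exfalso
      apply hne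
      rw [pe_eq_iff']
      constructor
      · rw [hfst, ha]
      · rw [ha]
        simp [psrc] at hval ⊢
        omega
    · have := hfib _ h.symm
      obtain ⟨hfst, hval⟩ := ptar_eq this
      rw [pe_eq_iff']
      exact ⟨hfst, by simpa [ptar] using hval⟩
  subst he'
  have hvp : c ⟨s, ⟨t + 1, by omega⟩⟩ ∈ epair c a := by
    rw [← hep, mem_epair]
    left
    exact (congrArg c (psrc_mk.trans (pv_eq_iff'.mpr ⟨rfl, by simp⟩))).symm
  rw [mem_epair] at hvp
  rcases hvp with h | h
  · exfalso
    rw [hsrc] at h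
    have := hfib _ h
    have := (pv_eq_iff'.mp this).2
    simp at this
    omega
  · rw [h]
    exact (congrArg c (ptar_mk.trans (pv_eq_iff'.mpr ⟨rfl, by simp⟩))).symm

lemma eqvgen_fixed {c : PathVertex d → β} {b : β} {s : Fin r} {vt : Fin (d s + 1)}
    (hfib : ∀ x, c x = b → x = ⟨s, vt⟩)
    (hall : ∀ j : Fin (d s), b ∈ epair c ⟨s, j⟩) :
    ∀ x y, Relation.EqvGen (Overlay c) x y → (x = s → y = s) ∧ (y = s → x = s) := by
  have key : ∀ (y : Fin r) (u' : Fin (d y)), b ∈ epair c ⟨y, u'⟩ → y = s := by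
    intro y u' hb
    rw [mem_epair] at hb
    rcases hb with h | h
    · exact (psrc_eq (hfib _ h.symm)).1
    · exact (ptar_eq (hfib _ h.symm)).1
  have step : ∀ x y, Overlay c x y → (x = s → y = s) ∧ (y = s → x = s) := by
    intro x y hxy
    obtain ⟨u, u', hep⟩ := hxy
    constructor
    · rintro rfl
      exact key y u' (hep ▸ hall u)
    · rintro rfl
      exact key x u (hep.symm ▸ hall u')
  intro x y h
  induction h with
  | rel a b' hab => exact step a b' hab
  | refl a => exact ⟨id, id⟩
  | symm a b' _ ih => exact ⟨ih.2, ih.1⟩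
  | trans a b' c' _ _ ih1 ih2 => exact ⟨fun h => ih2.1 (ih1.1 h), fun h => ih1.2 (ih2.2 h)⟩

lemma mem_card_one {α : Type} {s : Finset α} {x : α} (h : s.card = 1) (hx : x ∈ s) :
    ∀ y ∈ s, y = x := by
  obtain ⟨z, hz⟩ := Finset.card_eq_one.mp h
  rw [hz] at hx ⊢
  simp only [Finset.mem_singleton] at hx
  intro y hy
  simp only [Finset.mem_singleton] at hy
  rw [hy, hx]

lemma wt_le_two {c : PathVertex d → β} (q : β) : wt c q ≤ 2 := by
  unfold wt
  split_ifs <;> omega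

lemma surgery {c : PathVertex d → β}
    (hd : ∀ s', 1 ≤ d s')
    (hmult : ∀ e : PathEdge d, c (psrc e) ≠ c (ptar e) → ∃ e', e' ≠ e ∧ epair c e' = epair c e)
    {b : β} {s : Fin r} {t : ℕ} (h1t : 1 ≤ t) (h2t : t < d s) (h3 : 3 ≤ d s)
    (hfib : ∀ x, c x = b → x = ⟨s, ⟨t, Nat.lt_succ_of_lt h2t⟩⟩)
    (hb : c ⟨s, ⟨t, Nat.lt_succ_of_lt h2t⟩⟩ = b)
    (hnb : c ⟨s, ⟨t - 1, by omega⟩⟩ = c ⟨s, ⟨t + 1, by omega⟩⟩)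
    (hbad0 : nOut c b = 0) (hbad1 : nIn c b = 1) :
    ∃ (c' : PathVertex (Function.update d s (d s - 2)) → β),
      (∀ s', 1 ≤ Function.update d s (d s - 2) s') ∧
      (∀ e : PathEdge (Function.update d s (d s - 2)), c' (psrc e) ≠ c' (ptar e) →
        ∃ e', e' ≠ e ∧ epair c' e' = epair c' e) ∧
      (∀ x y : Fin r, Overlay c x y → x = y ∨ Overlay c' x y) ∧
      ((∑ s', Function.update d s (d s - 2) s') + 2 = ∑ s', d s') ∧
      (∑ q, wt c q ≤ ∑ q, wt c' q + 2) := by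
  classical
  -- named vertices
  set vt : PathVertex d := ⟨s, ⟨t, Nat.lt_succ_of_lt h2t⟩⟩ with hvt
  set vm : PathVertex d := ⟨s, ⟨t - 1, by omega⟩⟩ with hvm
  set vp : PathVertex d := ⟨s, ⟨t + 1, by omega⟩⟩ with hvp
  set p : β := c vm with hpdef
  have hcvp : c vp = p := hnb.symm
  have hcvm : c vm = p := rfl
  have hbvt : c vt = b := hb
  have hfib' : ∀ x, c x = b → x = vt := hfib
  have hvtin : ¬ IsOuter vt := by
    rw [isOuter_iff]
    dsimp only [vt]
    omega
  have hbp : b ≠ p := by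
    intro h
    have := hfib' vm h.symm
    have := (pv_eq_iff'.mp this).2
    dsimp only [vt, vm] at this
    omega
  set w : PathVertex d := if t + 1 = d s then vm else vp with hwdef
  have hcw : c w = p := by
    rw [hwdef]
    split_ifs
    · exact hcvm
    · exact hcvp
  have hwin : ¬ IsOuter w := by
    rw [hwdef]
    split_ifs with hds <;> rw [isOuter_iff]
    · dsimp only [vm]; omega
    · dsimp only [vp]; omega
  have hvtw : vt ≠ w := by
    rw [hwdef]
    split_ifs with hds <;> intro h <;> have := (pv_eq_iff'.mp h).2
    · dsimp only [vt, vm] at this; omega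
    · dsimp only [vt, vp] at this; omega
  have hsame : ∀ (m m' : ℕ) (hm : m < d s + 1) (hm' : m' < d s + 1),
      (m = m' ∨ (m = t - 1 ∧ m' = t + 1) ∨ (m = t + 1 ∧ m' = t - 1)) →
      c ⟨s, ⟨m, hm⟩⟩ = c ⟨s, ⟨m', hm'⟩⟩ := by
    rintro m m' hm hm' (rfl | ⟨rfl, rfl⟩ | ⟨rfl, rfl⟩)
    · exact cv_congr rfl
    · exact hnb
    · exact hnb.symm
  -- the vertex injection
  set Φ := phiV d s t h1t h2t with hPhi
  set c2 : PathVertex (Function.update d s (d s - 2)) → β := fun x => c (Φ x) with hc2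
  have hinj : Function.Injective Φ := by
    intro x y hxy
    obtain ⟨hf, hv⟩ := pv_eq_iff'.mp hxy
    rw [phiV_fst, phiV_fst] at hf
    rw [phiV_val, phiV_val] at hv
    refine pv_eq_iff'.mpr ⟨hf, ?_⟩
    by_cases hx1 : x.1 = s
    · have hy1 : y.1 = s := hf ▸ hx1
      rw [if_pos hx1, if_pos hy1] at hv
      have hxu := nv_lt x hx1
      have hyu := nv_lt y hy1
      unfold wval at hv
      split_ifs at hv <;> omega
    · have hy1 : y.1 ≠ s := hf ▸ hx1
      rwa [if_neg hx1, if_neg hy1] at hv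
  have houter : ∀ x, IsOuter (Φ x) ↔ IsOuter x := by
    intro x
    rw [isOuter_iff, isOuter_iff, phiV_val, phiV_fst]
    by_cases hx1 : x.1 = s
    · have hds : d x.1 = d s := by rw [hx1]
      have hupd : Function.update d s (d s - 2) x.1 = d s - 2 := by
        rw [hx1, Function.update_self]
      have hxu := nv_lt x hx1
      rw [if_pos hx1, hds]
      simp only [hupd]
      unfold wval
      split_ifs <;> (try simp only [false_or]) <;> omega
    · have hupd : Function.update d s (d s - 2) x.1 = d x.1 :=
        Function.update_of_ne hx1 _ _
      rw [if_neg hx1]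
      simp only [hupd]
  have hwval : w.2.val = if t + 1 = d s then t - 1 else t + 1 := by
    by_cases h : t + 1 = d s
    · rw [hwdef, if_pos h, if_pos h]
    · rw [hwdef, if_neg h, if_neg h]
  have hwfst : w.1 = s := by
    by_cases h : t + 1 = d s
    · rw [hwdef, if_pos h]
    · rw [hwdef, if_neg h]
  have hmiss : ∀ x, Φ x ≠ vt ∧ Φ x ≠ w := by
    intro x
    by_cases hf : x.1 = s
    · have hu := nv_lt x hf
      have hphival : (Φ x).2.val = wval (d s) t x.2.val := by
        rw [phiV_val, if_pos hf]
      constructor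
      · intro hx
        have hv := (pv_eq_iff'.mp hx).2
        rw [hphival] at hv
        have hvtval : vt.2.val = t := rfl
        rw [hvtval] at hv
        unfold wval at hv
        split_ifs at hv <;> omega
      · intro hx
        have hv := (pv_eq_iff'.mp hx).2
        rw [hphival, hwval] at hv
        unfold wval at hv
        split_ifs at hv <;> omega
    · constructor
      · intro hx
        have h1 := (pv_eq_iff'.mp hx).1
        rw [phiV_fst] at h1
        exact hf h1
      · intro hx
        have h1 := (pv_eq_iff'.mp hx).1
        rw [phiV_fst, hwfst] at h1
        exact hf h1
  have hsur : ∀ v : PathVertex d, v ≠ vt → v ≠ w → ∃ x, Φ x = v := by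
    intro v hv1 hv2
    obtain ⟨s', m⟩ := v
    by_cases hf : s' = s
    · subst hf
      have hm := m.isLt
      have hmvt : m.val ≠ t := fun h => hv1 (pv_eq_iff'.mpr ⟨rfl, h⟩)
      have hmw : m.val ≠ (if t + 1 = d s' then t - 1 else t + 1) := fun h =>
        hv2 (pv_eq_iff'.mpr ⟨hwfst.symm, by rw [hwval]; exact h⟩)
      refine ⟨⟨s', ⟨if m.val + 2 ≤ t then m.val
          else if t + 2 ≤ m.val then m.val - 2 else t - 1, by
        rw [Function.update_self]; split_ifs <;> omega⟩⟩, ?_⟩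
      refine pv_eq_iff'.mpr ⟨by rw [phiV_fst], ?_⟩
      rw [phiV_val]
      dsimp only
      rw [if_pos rfl]
      unfold wval
      by_cases hds : t + 1 = d s' <;> split_ifs at hmw ⊢ <;> omega
    · refine ⟨⟨s', ⟨m.val, by rw [Function.update_of_ne hf]; exact m.isLt⟩⟩, ?_⟩
      refine pv_eq_iff'.mpr ⟨by rw [phiV_fst], ?_⟩
      rw [phiV_val]
      dsimp only
      rw [if_neg hf]
  -- counting
  have hOut : ∀ q, nOut c q = nOut c2 q := by
    intro q
    have h := card_transfer Φ hinj vt w hvtw hmiss hsur (fun v => c v = q ∧ IsOuter v)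
    have h1 : (if c vt = q ∧ IsOuter vt then 1 else 0) = 0 := by simp [hvtin]
    have h2 : (if c w = q ∧ IsOuter w then 1 else 0) = 0 := by simp [hwin]
    have h3 : (Finset.univ.filter fun x => c (Φ x) = q ∧ IsOuter (Φ x))
        = (Finset.univ.filter fun x => c2 x = q ∧ IsOuter x) :=
      Finset.filter_congr fun x _ => by simp [hc2, houter x]
    rw [h1, h2, h3] at h
    unfold nOut
    omega
  have hIn : ∀ q, nIn c q = nIn c2 q + (if q = b then 1 else 0) + (if q = p then 1 else 0) := by
    intro q
    have h := card_transfer Φ hinj vt w hvtw hmiss hsur (fun v => c v = q ∧ ¬ IsOuter v)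
    have e1 : (if c vt = q ∧ ¬ IsOuter vt then 1 else 0) = if q = b then 1 else 0 := by
      by_cases hq : q = b <;> simp [hq, hbvt, hvtin]
      intro h'
      exact hq h'.symm
    have e2 : (if c w = q ∧ ¬ IsOuter w then 1 else 0) = if q = p then 1 else 0 := by
      by_cases hq : q = p <;> simp [hq, hcw, hwin]
      intro h'
      exact hq h'.symm
    have h3 : (Finset.univ.filter fun x => c (Φ x) = q ∧ ¬ IsOuter (Φ x))
        = (Finset.univ.filter fun x => c2 x = q ∧ ¬ IsOuter x) :=
      Finset.filter_congr fun x _ => by simp [hc2, houter x]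
    rw [e1, e2, h3] at h
    unfold nIn
    omega
  -- strength of the neighbour block p
  have hvmvp : vm ≠ vp := by
    intro h
    have := (pv_eq_iff'.mp h).2
    dsimp only [vm, vp] at this
    omega
  have hpair : ∀ x y : PathVertex d, x ≠ y → c x = p → c y = p → ¬ IsOuter x → ¬ IsOuter y →
      2 ≤ nIn c p := by
    intro x y hxy hx hy hxin hyin
    have hsub : ({x, y} : Finset (PathVertex d)) ⊆
        Finset.univ.filter fun v => c v = p ∧ ¬ IsOuter v := by
      intro z hz
      simp only [Finset.mem_insert, Finset.mem_singleton] at hz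
      rcases hz with rfl | rfl <;> simp [hx, hy, hxin, hyin]
    have := Finset.card_le_card hsub
    rwa [Finset.card_insert_of_notMem (by simpa using hxy), Finset.card_singleton] at this
  have hnotboth : ¬ (IsOuter vm ∧ IsOuter vp) := by
    rintro ⟨h1, h2⟩
    rw [isOuter_iff] at h1 h2
    dsimp only [vm, vp] at h1 h2
    omega
  have hp0 : nOut c p = 0 → 2 ≤ nIn c p := by
    intro h0p
    have hnouter : ∀ z : PathVertex d, c z = p → ¬ IsOuter z := by
      intro z hz hzout
      have : z ∈ Finset.univ.filter fun v => c v = p ∧ IsOuter v := by simp [hz, hzout]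
      rw [Finset.card_eq_zero.mp h0p] at this
      simp at this
    exact hpair vm vp hvmvp hcvm hcvp (hnouter _ hcvm) (hnouter _ hcvp)
  have hp1 : nOut c p = 1 → 2 ≤ nIn c p := by
    intro h1p
    by_contra hcon
    push_neg at hcon
    have houtone : IsOuter vm ∨ IsOuter vp := by
      by_contra hno
      push_neg at hno
      exact absurd (hpair vm vp hvmvp hcvm hcvp hno.1 hno.2) (by omega)
    rcases houtone with hOm | hOp
    · -- t = 1 : vm = v₀ outer, vp = v₂ inner
      have ht1 : t = 1 := by
        rw [isOuter_iff] at hOm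
        rw [hvm] at hOm
        dsimp only at hOm
        omega
      have hvpin : ¬ IsOuter vp := by
        rw [isOuter_iff, hvp]
        dsimp only
        omega
      have hvpmem : vp ∈ Finset.univ.filter fun v => c v = p ∧ ¬ IsOuter v := by
        simp [hcvp, hvpin]
      have hIn1 : nIn c p = 1 := by
        have hpos : 0 < nIn c p := Finset.card_pos.mpr ⟨vp, hvpmem⟩
        omega
      have hfibp : ∀ x, c x = p → x = vm ∨ x = vp := by
        intro x hx
        by_cases ho : IsOuter x
        · exact Or.inl (mem_card_one h1p (by simp [hcvm, hOm]) x (by simp [hx, ho]))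
        · exact Or.inr (mem_card_one hIn1 hvpmem x (by simp [hx, ho]))
      have h2lt : 2 < d s := by omega
      have h3lt : 3 < d s + 1 := by omega
      have hsrcg : psrc (⟨s, ⟨2, h2lt⟩⟩ : PathEdge d) = ⟨s, ⟨3, h3lt⟩⟩ :=
        pv_eq_iff'.mpr ⟨rfl, rfl⟩
      have htarg : ptar (⟨s, ⟨2, h2lt⟩⟩ : PathEdge d) = vp := by
        rw [hvp]
        exact pv_eq_iff'.mpr ⟨rfl, by show (2 : ℕ) = t + 1; omega⟩
      have hv3 : c ⟨s, ⟨3, h3lt⟩⟩ ≠ p := by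
        intro h
        rcases hfibp _ h with h' | h' <;> rw [pv_eq_iff'] at h'
        · rw [hvm] at h'; have := h'.2; dsimp only at this; omega
        · rw [hvp] at h'; have := h'.2; dsimp only at this; omega
      obtain ⟨e', hne, hep⟩ := hmult ⟨s, ⟨2, h2lt⟩⟩
        (by rw [hsrcg, htarg, hcvp]; exact hv3)
      have hpmem : p ∈ epair c e' := by
        rw [hep, mem_epair]
        right
        rw [htarg, hcvp]
      rw [mem_epair] at hpmem
      have hble : b ∈ epair c e' := by
        have he' : e' = (⟨s, ⟨0, by omega⟩⟩ : PathEdge d) ∨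
            e' = (⟨s, ⟨1, by omega⟩⟩ : PathEdge d) := by
          rcases hpmem with h | h
          · rcases hfibp _ h.symm with h' | h'
            · exfalso
              rw [hvm] at h'
              obtain ⟨hf', hval'⟩ := psrc_eq h'
              dsimp only at hval'
              omega
            · rw [hvp] at h'
              obtain ⟨hf', hval'⟩ := psrc_eq h'
              dsimp only at hval'
              right
              exact pe_eq_iff'.mpr ⟨hf', by show e'.2.val = 1; omega⟩
          · rcases hfibp _ h.symm with h' | h'
            · rw [hvm] at h'
              obtain ⟨hf', hval'⟩ := ptar_eq h'
              dsimp only at hval'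
              left
              exact pe_eq_iff'.mpr ⟨hf', by show e'.2.val = 0; omega⟩
            · exfalso
              rw [hvp] at h'
              obtain ⟨hf', hval'⟩ := ptar_eq h'
              dsimp only at hval'
              exact hne (pe_eq_iff'.mpr ⟨hf', by show e'.2.val = 2; omega⟩)
        rcases he' with h | h <;> rw [h, mem_epair]
        · left
          have : psrc (⟨s, ⟨0, by omega⟩⟩ : PathEdge d) = vt := by
            rw [hvt]; exact pv_eq_iff'.mpr ⟨rfl, by show (1 : ℕ) = t; omega⟩
          rw [this, hbvt]
        · right
          have : ptar (⟨s, ⟨1, by omega⟩⟩ : PathEdge d) = vt := by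
            rw [hvt]; exact pv_eq_iff'.mpr ⟨rfl, by show (1 : ℕ) = t; omega⟩
          rw [this, hbvt]
      rw [hep, mem_epair] at hble
      rcases hble with h | h
      · rw [hsrcg] at h
        have := hfib' _ h.symm
        rw [hvt, pv_eq_iff'] at this
        have := this.2
        dsimp only at this
        omega
      · rw [htarg, hcvp] at h
        exact hbp h
    · -- t + 1 = d s : vp outer, vm inner
      have htds : t + 1 = d s := by
        rw [isOuter_iff] at hOp
        rw [hvp] at hOp
        dsimp only at hOp
        omega
      have ht2 : 2 ≤ t := by omega
      have hvmin : ¬ IsOuter vm := by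
        rw [isOuter_iff, hvm]
        dsimp only
        omega
      have hvmmem : vm ∈ Finset.univ.filter fun v => c v = p ∧ ¬ IsOuter v := by
        simp [hcvm, hvmin]
      have hIn1 : nIn c p = 1 := by
        have hpos : 0 < nIn c p := Finset.card_pos.mpr ⟨vm, hvmmem⟩
        omega
      have hfibp : ∀ x, c x = p → x = vm ∨ x = vp := by
        intro x hx
        by_cases ho : IsOuter x
        · exact Or.inr (mem_card_one h1p (by simp [hcvp, hOp]) x (by simp [hx, ho]))
        · exact Or.inl (mem_card_one hIn1 hvmmem x (by simp [hx, ho]))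
      have h2lt : t - 2 < d s := by omega
      have h3lt : t - 2 < d s + 1 := by omega
      have hsrcg : psrc (⟨s, ⟨t - 2, h2lt⟩⟩ : PathEdge d) = vm := by
        rw [hvm]
        exact pv_eq_iff'.mpr ⟨rfl, by show t - 2 + 1 = t - 1; omega⟩
      have htarg : ptar (⟨s, ⟨t - 2, h2lt⟩⟩ : PathEdge d) = ⟨s, ⟨t - 2, h3lt⟩⟩ :=
        pv_eq_iff'.mpr ⟨rfl, rfl⟩
      have hv3 : c ⟨s, ⟨t - 2, h3lt⟩⟩ ≠ p := by
        intro h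
        rcases hfibp _ h with h' | h' <;> rw [pv_eq_iff'] at h'
        · rw [hvm] at h'; have := h'.2; dsimp only at this; omega
        · rw [hvp] at h'; have := h'.2; dsimp only at this; omega
      obtain ⟨e', hne, hep⟩ := hmult ⟨s, ⟨t - 2, h2lt⟩⟩
        (by rw [hsrcg, htarg, hcvm]; exact fun h => hv3 h.symm)
      have hpmem : p ∈ epair c e' := by
        rw [hep, mem_epair]
        left
        rw [hsrcg, hcvm]
      rw [mem_epair] at hpmem
      have hble : b ∈ epair c e' := by
        have he' : e' = (⟨s, ⟨t - 1, by omega⟩⟩ : PathEdge d) ∨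
            e' = (⟨s, ⟨t, h2t⟩⟩ : PathEdge d) := by
          rcases hpmem with h | h
          · rcases hfibp _ h.symm with h' | h'
            · exfalso
              rw [hvm] at h'
              obtain ⟨hf', hval'⟩ := psrc_eq h'
              dsimp only at hval'
              exact hne (pe_eq_iff'.mpr ⟨hf', by show e'.2.val = t - 2; omega⟩)
            · rw [hvp] at h'
              obtain ⟨hf', hval'⟩ := psrc_eq h'
              dsimp only at hval'
              right
              exact pe_eq_iff'.mpr ⟨hf', by show e'.2.val = t; omega⟩
          · rcases hfibp _ h.symm with h' | h'
            · rw [hvm] at h'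
              obtain ⟨hf', hval'⟩ := ptar_eq h'
              dsimp only at hval'
              left
              exact pe_eq_iff'.mpr ⟨hf', by show e'.2.val = t - 1; omega⟩
            · exfalso
              rw [hvp] at h'
              obtain ⟨hf', hval'⟩ := ptar_eq h'
              dsimp only at hval'
              have hlt := e'.2.isLt
              have hds' : d e'.1 = d s := by rw [hf']
              omega
        rcases he' with h | h <;> rw [h, mem_epair]
        · left
          have : psrc (⟨s, ⟨t - 1, by omega⟩⟩ : PathEdge d) = vt := by
            rw [hvt]; exact pv_eq_iff'.mpr ⟨rfl, by show t - 1 + 1 = t; omega⟩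
          rw [this, hbvt]
        · right
          have : ptar (⟨s, ⟨t, h2t⟩⟩ : PathEdge d) = vt := by
            rw [hvt]; exact pv_eq_iff'.mpr ⟨rfl, rfl⟩
          rw [this, hbvt]
      rw [hep, mem_epair] at hble
      rcases hble with h | h
      · rw [hsrcg, hcvm] at h
        exact hbp h
      · rw [htarg] at h
        have := hfib' _ h.symm
        rw [hvt, pv_eq_iff'] at this
        have := this.2
        dsimp only at this
        omega
  -- wt comparison
  have hwt : ∀ q, wt c q ≤ wt c2 q + (if q = b then 2 else 0) := by
    intro q
    by_cases hqb : q = b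
    · rw [if_pos hqb]
      have := wt_le_two (c := c) q
      omega
    · rw [if_neg hqb]
      have hI := hIn q
      have hO := hOut q
      rw [if_neg hqb] at hI
      by_cases hqp : q = p
      · subst hqp
        rw [if_pos rfl] at hI
        have hbig : 2 ≤ nIn c p ∨ 2 ≤ nOut c p := by
          by_cases h0 : nOut c p = 0
          · exact Or.inl (hp0 h0)
          · by_cases h1 : nOut c p = 1
            · exact Or.inl (hp1 h1)
            · exact Or.inr (by omega)
        unfold wt
        rcases hbig with h | h <;> split_ifs <;> omega
      · rw [if_neg hqp] at hI
        unfold wt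
        split_ifs <;> omega
  -- edge machinery
  set a1 : PathEdge d := ⟨s, ⟨t - 1, by omega⟩⟩ with ha1
  set a2 : PathEdge d := ⟨s, ⟨t, h2t⟩⟩ with ha2
  have ha1src : psrc a1 = vt := by
    rw [ha1, hvt]
    exact pv_eq_iff'.mpr ⟨rfl, by show t - 1 + 1 = t; omega⟩
  have ha2tar : ptar a2 = vt := by
    rw [ha2, hvt]
    exact pv_eq_iff'.mpr ⟨rfl, rfl⟩
  have hba1 : b ∈ epair c a1 := mem_epair.mpr (Or.inl (by rw [ha1src, hbvt]))
  have hba2 : b ∈ epair c a2 := mem_epair.mpr (Or.inr (by rw [ha2tar, hbvt]))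
  have hbedge : ∀ e : PathEdge d, b ∈ epair c e → e = a1 ∨ e = a2 := by
    intro e he
    rw [mem_epair] at he
    rcases he with h | h
    · have h2 := hfib' _ h.symm
      rw [hvt] at h2
      obtain ⟨hf, hval⟩ := psrc_eq h2
      dsimp only at hval
      left
      rw [ha1]
      exact pe_eq_iff'.mpr ⟨hf, by show e.2.val = t - 1; omega⟩
    · have h2 := hfib' _ h.symm
      rw [hvt] at h2
      obtain ⟨hf, hval⟩ := ptar_eq h2
      dsimp only at hval
      right
      rw [ha2]
      exact pe_eq_iff'.mpr ⟨hf, by show e.2.val = t; omega⟩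
  set E := eV d s t h1t h2t h3 with hE
  have hcore : ∀ v1 v2 : PathVertex d, v1.1 = s → v2.1 = s →
      (v1.2.val = v2.2.val ∨ (v1.2.val = t - 1 ∧ v2.2.val = t + 1) ∨
        (v1.2.val = t + 1 ∧ v2.2.val = t - 1)) → c v1 = c v2 := by
    intro v1 v2 hx1 hx2 hdisj
    have e1 : v1 = ⟨s, ⟨v1.2.val, by rw [← hx1]; exact v1.2.isLt⟩⟩ := pv_eq_iff'.mpr ⟨hx1, rfl⟩
    have e2 : v2 = ⟨s, ⟨v2.2.val, by rw [← hx2]; exact v2.2.isLt⟩⟩ := pv_eq_iff'.mpr ⟨hx2, rfl⟩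
    rw [e1, e2]
    exact hsame _ _ _ _ hdisj
  have hkey : ∀ f, c2 (psrc f) = c (psrc (E f)) ∧ c2 (ptar f) = c (ptar (E f)) := by
    intro f
    by_cases hf : f.1 = s
    · have hu := ne_lt f hf
      constructor
      · show c (Φ (psrc f)) = c (psrc (E f))
        have h1 : (Φ (psrc f)).1 = s := by rw [phiV_fst]; exact hf
        have h2 : (psrc (E f)).1 = s := by rw [psrc_fst, eV_fst]; exact hf
        have hv1 : (Φ (psrc f)).2.val = wval (d s) t (f.2.val + 1) := by
          rw [phiV_val, if_pos (show (psrc f).1 = s from hf), psrc_val]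
        have hv2 : (psrc (E f)).2.val = eval' t f.2.val + 1 := by
          rw [psrc_val, eV_val, if_pos hf]
        apply hcore _ _ h1 h2
        rw [hv1, hv2]
        unfold wval eval'
        split_ifs <;> omega
      · show c (Φ (ptar f)) = c (ptar (E f))
        have h1 : (Φ (ptar f)).1 = s := by rw [phiV_fst]; exact hf
        have h2 : (ptar (E f)).1 = s := by rw [ptar_fst, eV_fst]; exact hf
        have hv1 : (Φ (ptar f)).2.val = wval (d s) t f.2.val := by
          rw [phiV_val, if_pos (show (ptar f).1 = s from hf), ptar_val]
        have hv2 : (ptar (E f)).2.val = eval' t f.2.val := by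
          rw [ptar_val, eV_val, if_pos hf]
        apply hcore _ _ h1 h2
        rw [hv1, hv2]
        unfold wval eval'
        split_ifs <;> omega
    · have hfeq : Φ (psrc f) = psrc (E f) := by
        refine pv_eq_iff'.mpr ⟨?_, ?_⟩
        · rw [phiV_fst, psrc_fst, psrc_fst, eV_fst]
        · rw [phiV_val, if_neg (show ¬ (psrc f).1 = s from hf), psrc_val, psrc_val,
            eV_val, if_neg hf]
      have hteq : Φ (ptar f) = ptar (E f) := by
        refine pv_eq_iff'.mpr ⟨?_, ?_⟩
        · rw [phiV_fst, ptar_fst, ptar_fst, eV_fst]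
        · rw [phiV_val, if_neg (show ¬ (ptar f).1 = s from hf), ptar_val, ptar_val,
            eV_val, if_neg hf]
      exact ⟨by show c (Φ (psrc f)) = _; rw [hfeq], by show c (Φ (ptar f)) = _; rw [hteq]⟩
  have hepair : ∀ f, epair c2 f = epair c (E f) := by
    intro f
    unfold epair
    rw [(hkey f).1, (hkey f).2]
  have hEmiss : ∀ f, E f ≠ a1 ∧ E f ≠ a2 := by
    intro f
    by_cases hf : f.1 = s
    · have hu := ne_lt f hf
      constructor <;> intro h <;> obtain ⟨h1, h2⟩ := pe_eq_iff'.mp h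
      · rw [eV_val, if_pos hf] at h2
        have h2' : eval' t f.2.val = t - 1 := h2
        unfold eval' at h2'
        split_ifs at h2' <;> omega
      · rw [eV_val, if_pos hf] at h2
        have h2' : eval' t f.2.val = t := h2
        unfold eval' at h2'
        split_ifs at h2' <;> omega
    · constructor <;> intro h <;> obtain ⟨h1, -⟩ := pe_eq_iff'.mp h <;>
        rw [eV_fst] at h1 <;> exact hf h1
  have hEpre : ∀ e : PathEdge d, e ≠ a1 → e ≠ a2 → ∃ f, E f = e := by
    intro e he1 he2
    obtain ⟨s', j⟩ := e
    by_cases hf : s' = s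
    · subst hf
      have hj := j.isLt
      have hj1 : j.val ≠ t - 1 := fun h => he1 (by rw [ha1]; exact pe_eq_iff'.mpr ⟨rfl, h⟩)
      have hj2 : j.val ≠ t := fun h => he2 (by rw [ha2]; exact pe_eq_iff'.mpr ⟨rfl, h⟩)
      refine ⟨⟨s', ⟨if j.val + 2 ≤ t then j.val else j.val - 2, by
        rw [Function.update_self]; split_ifs <;> omega⟩⟩, ?_⟩
      refine pe_eq_iff'.mpr ⟨by rw [eV_fst], ?_⟩
      rw [eV_val]
      dsimp only
      rw [if_pos rfl]
      unfold eval'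
      split_ifs <;> omega
    · refine ⟨⟨s', ⟨j.val, by rw [Function.update_of_ne hf]; exact j.isLt⟩⟩, ?_⟩
      refine pe_eq_iff'.mpr ⟨by rw [eV_fst], ?_⟩
      rw [eV_val]
      dsimp only
      rw [if_neg hf]
  refine ⟨c2, ?_, ?_, ?_, ?_, ?_⟩
  · intro s'
    by_cases h : s' = s
    · subst h; rw [Function.update_self]; omega
    · rw [Function.update_of_ne h]; exact hd s'
  · -- multiplicity for c2
    intro f hloop
    have hl : c (psrc (E f)) ≠ c (ptar (E f)) := by
      rw [← (hkey f).1, ← (hkey f).2]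
      exact hloop
    obtain ⟨e', hne, hep⟩ := hmult (E f) hl
    have hne1 : e' ≠ a1 := by
      intro h
      rw [h] at hep
      have hbEf : b ∈ epair c (E f) := hep ▸ hba1
      rcases hbedge (E f) hbEf with h' | h'
      · exact (hEmiss f).1 h'
      · exact (hEmiss f).2 h'
    have hne2 : e' ≠ a2 := by
      intro h
      rw [h] at hep
      have hbEf : b ∈ epair c (E f) := hep ▸ hba2
      rcases hbedge (E f) hbEf with h' | h'
      · exact (hEmiss f).1 h'
      · exact (hEmiss f).2 h'
    obtain ⟨f', hf'⟩ := hEpre e' hne1 hne2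
    refine ⟨f', fun h => hne (by rw [← hf', h]), ?_⟩
    rw [hepair, hepair, hf']
    exact hep
  · -- overlay step for c2
    intro x y hxy
    obtain ⟨u, u', hep⟩ := hxy
    by_cases hg : (⟨x, u⟩ : PathEdge d) = a1 ∨ (⟨x, u⟩ : PathEdge d) = a2
    · have hbx : b ∈ epair c ⟨x, u⟩ := by
        rcases hg with h | h <;> rw [h]
        · exact hba1
        · exact hba2
      have hby : b ∈ epair c ⟨y, u'⟩ := hep ▸ hbx
      left
      have hx1 : x = s := by
        rcases hbedge _ hbx with h | h
        · rw [ha1] at h; exact congrArg Sigma.fst h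
        · rw [ha2] at h; exact congrArg Sigma.fst h
      have hy1 : y = s := by
        rcases hbedge _ hby with h | h
        · rw [ha1] at h; exact congrArg Sigma.fst h
        · rw [ha2] at h; exact congrArg Sigma.fst h
      rw [hx1, hy1]
    · push_neg at hg
      by_cases hg' : (⟨y, u'⟩ : PathEdge d) = a1 ∨ (⟨y, u'⟩ : PathEdge d) = a2
      · exfalso
        have hby : b ∈ epair c ⟨y, u'⟩ := by
          rcases hg' with h | h <;> rw [h]
          · exact hba1
          · exact hba2
        have hbx : b ∈ epair c ⟨x, u⟩ := hep.symm ▸ hby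
        rcases hbedge _ hbx with h | h
        · exact hg.1 h
        · exact hg.2 h
      · push_neg at hg'
        obtain ⟨f, hfE⟩ := hEpre _ hg.1 hg.2
        obtain ⟨f', hf'E⟩ := hEpre _ hg'.1 hg'.2
        right
        obtain ⟨f1, f2⟩ := f
        have hf1 : f1 = x := by
          have h := congrArg Sigma.fst hfE
          rw [eV_fst] at h
          exact h
        subst hf1
        obtain ⟨f1', f2'⟩ := f'
        have hf1' : f1' = y := by
          have h := congrArg Sigma.fst hf'E
          rw [eV_fst] at h
          exact h
        subst hf1'
        refine ⟨f2, f2', ?_⟩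
        rw [hepair, hepair, hfE, hf'E]
        exact hep
  · rw [Finset.sum_update_of_mem (Finset.mem_univ s)]
    have := Finset.sum_eq_sum_sdiff_singleton_add (Finset.mem_univ s) d
    omega
  · calc ∑ q, wt c q ≤ ∑ q, (wt c2 q + if q = b then 2 else 0) := Finset.sum_le_sum fun q _ => hwt q
      _ = ∑ q, wt c2 q + 2 := by
          rw [Finset.sum_add_distrib, Finset.sum_ite_eq' Finset.univ b fun _ => 2]
          simp

lemma nobad_bound {c : PathVertex d → β} (hd : ∀ s, 1 ≤ d s)
    (hnobad : ∀ q, ¬ (nOut c q = 0 ∧ nIn c q = 1)) :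
    (∑ q, wt c q) + r ≤ ∑ s, d s := by
  have h1 := sum_nIn c
  have h2 := inner_card (d := d) hd
  have h3 : ∑ q, wt c q ≤ ∑ q, nIn c q :=
    Finset.sum_le_sum fun q _ => wt_le_nIn hnobad q
  omega

theorem natMain : ∀ (N r : ℕ) (d : Fin r → ℕ), (∀ s, 1 ≤ d s) →
    ∀ (β : Type) (iF : Fintype β) (iD : DecidableEq β) (c : PathVertex d → β),
    (∀ e : PathEdge d, c (psrc e) ≠ c (ptar e) → ∃ e', e' ≠ e ∧ epair c e' = epair c e) →
    (∀ s₁ : Fin r, ∃ s₂, s₁ ≠ s₂ ∧ Relation.EqvGen (Overlay c) s₁ s₂) →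
    (∑ s, d s) ≤ N →
    (∑ q, wt c q) + r ≤ ∑ s, d s := by
  intro N
  induction N with
  | zero =>
    intro r d hd β iF iD c hmult hov hsum
    refine nobad_bound hd fun q hq => ?_
    obtain ⟨v, -, -, -⟩ := singleton_fiber hq.1 hq.2
    have h1 : 1 ≤ d v.1 := hd v.1
    have h2 : d v.1 ≤ ∑ s, d s :=
      Finset.single_le_sum (fun s _ => Nat.zero_le (d s)) (Finset.mem_univ v.1)
    omega
  | succ N ih =>
    intro r d hd β iF iD c hmult hov hsum
    by_cases hbadex : ∃ q, nOut c q = 0 ∧ nIn c q = 1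
    · obtain ⟨bq, hb0, hb1⟩ := hbadex
      obtain ⟨s, t, h1t, h2t, hfib, hbv, hnb⟩ := bad_structure hmult hb0 hb1
      by_cases h3 : 3 ≤ d s
      · obtain ⟨c', hd', hmult', hstep, hsum', hwt'⟩ :=
          surgery hd hmult h1t h2t h3 hfib hbv hnb hb0 hb1
        have hov' : ∀ s₁ : Fin r, ∃ s₂, s₁ ≠ s₂ ∧ Relation.EqvGen (Overlay c') s₁ s₂ := by
          intro s₁
          obtain ⟨s₂, hne, hgen⟩ := hov s₁
          refine ⟨s₂, hne, ?_⟩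
          clear hne
          induction hgen with
          | rel a b' hab =>
            rcases hstep a b' hab with h | h
            · subst h; exact Relation.EqvGen.refl _
            · exact Relation.EqvGen.rel _ _ h
          | refl a => exact Relation.EqvGen.refl a
          | symm a b' _ ih' => exact Relation.EqvGen.symm _ _ ih'
          | trans a b' c'' _ _ ih1 ih2 => exact Relation.EqvGen.trans _ _ _ ih1 ih2
        have hrec := ih r (Function.update d s (d s - 2)) hd' β iF iD c' hmult' hov'
          (by omega)
        omega
      · exfalso
        have hds : d s = 2 := by omega
        have ht1 : t = 1 := by omega
        have hall : ∀ j : Fin (d s), bq ∈ epair c ⟨s, j⟩ := by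
          intro j
          have hj := j.isLt
          have hj01 : j.val = 0 ∨ j.val = 1 := by omega
          rcases hj01 with h0 | h1
          · rw [mem_epair]
            left
            have heq : psrc (⟨s, j⟩ : PathEdge d) = ⟨s, ⟨t, Nat.lt_succ_of_lt h2t⟩⟩ :=
              pv_eq_iff'.mpr ⟨rfl, by rw [psrc_val]; dsimp only; omega⟩
            rw [heq, hbv]
          · rw [mem_epair]
            right
            have heq : ptar (⟨s, j⟩ : PathEdge d) = ⟨s, ⟨t, Nat.lt_succ_of_lt h2t⟩⟩ :=
              pv_eq_iff'.mpr ⟨rfl, by rw [ptar_val]; dsimp only; omega⟩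
            rw [heq, hbv]
        obtain ⟨s₂, hne, hgen⟩ := hov s
        exact hne (((eqvgen_fixed hfib hall s s₂ hgen).1 rfl) ▸ rfl)
    · exact nobad_bound hd fun q hq => hbadex ⟨q, hq⟩

end CCB

/-- Combinatorial concentration bound: for a partition (quotient map `c`) of the disjoint
union of `r` directed paths such that (i) every non-loop edge class has multiplicity at
least 2 and (ii) every class of the edge-overlay equivalence on `[r]` has size at least 2,
one has `#(π^{(1,≥1)})/2 + #(π^{(0,≥1)}) + r/2 ≤ (∑ s, d s)/2`. -/
theorem combinatorial_concentration_bound (r : ℕ) (d : Fin r → ℕ) (hd : ∀ s, 1 ≤ d s)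
    (β : Type) [Fintype β] [DecidableEq β] (c : PathVertex d → β)
    (hsurj : Function.Surjective c)
    (hmult : ∀ e : PathEdge d, c (psrc e) ≠ c (ptar e) →
      ∃ e' : PathEdge d, e' ≠ e ∧ epair c e' = epair c e)
    (hoverlay : ∀ s : Fin r, ∃ s' : Fin r, s ≠ s' ∧ Relation.EqvGen (Overlay c) s s') :
    ((Finset.univ.filter fun b : β => nOut c b = 1 ∧ 1 ≤ nIn c b).card : ℚ) / 2 +
      ((Finset.univ.filter fun b : β => nOut c b = 0 ∧ 1 ≤ nIn c b).card : ℚ) +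
      (r : ℚ) / 2 ≤ (∑ s, (d s : ℚ)) / 2 := by
  have hmain := CCB.natMain (∑ s, d s) r d hd β inferInstance inferInstance c hmult hoverlay
    le_rfl
  rw [CCB.sum_wt] at hmain
  set A := (Finset.univ.filter fun b : β => nOut c b = 1 ∧ 1 ≤ nIn c b).card with hA
  set B := (Finset.univ.filter fun b : β => nOut c b = 0 ∧ 1 ≤ nIn c b).card with hB
  have hq : (A : ℚ) + 2 * B + r ≤ ∑ s, (d s : ℚ) := by
    have : ((A + 2 * B + r : ℕ) : ℚ) ≤ ((∑ s, d s : ℕ) : ℚ) := by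
      exact_mod_cast hmain
    push_cast at this
    linarith
  linarith
end

section
/- In the setting of the combinatorial inequality for central moments, if the partition π satisfies #(π^{(0,1)}) ≤ #(π^{(1,≥2)}), then #(π^{(1,≥1)})/2 + #(π^{(0,≥1)}) ≤ (D − r)/2, where D = ∑_{s=1}^r d_s. -/
open scoped BigOperators

/-- In the setting of the combinatorial inequality for central moments, if
`#(π^{(0,1)}) ≤ #(π^{(1,≥2)})`, then `#(π^{(1,≥1)})/2 + #(π^{(0,≥1)}) ≤ (D − r)/2`
with `D = ∑ s, d s`. -/
theorem combinatorial_bound_easy_case (r : ℕ) (d : Fin r → ℕ) (hd : ∀ s, 1 ≤ d s)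
    (β : Type) [Fintype β] [DecidableEq β] (c : PathVertex d → β)
    (hsurj : Function.Surjective c)
    (hmult : ∀ e : PathEdge d, c (psrc e) ≠ c (ptar e) →
      ∃ e' : PathEdge d, e' ≠ e ∧ epair c e' = epair c e)
    (hoverlay : ∀ s : Fin r, ∃ s' : Fin r, s ≠ s' ∧ Relation.EqvGen (Overlay c) s s')
    (hcase : (Finset.univ.filter fun b : β => nOut c b = 0 ∧ nIn c b = 1).card ≤
      (Finset.univ.filter fun b : β => nOut c b = 1 ∧ 2 ≤ nIn c b).card) :
    ((Finset.univ.filter fun b : β => nOut c b = 1 ∧ 1 ≤ nIn c b).card : ℚ) / 2 +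
      ((Finset.univ.filter fun b : β => nOut c b = 0 ∧ 1 ≤ nIn c b).card : ℚ) ≤
      ((∑ s, (d s : ℚ)) - (r : ℚ)) / 2 := by
  classical
  -- total number of inner vertices
  have hM : (∑ b : β, nIn c b) + r = ∑ s, d s := by
    have h1 : ∑ b : β, nIn c b
        = (Finset.univ.filter fun v : PathVertex d => ¬ IsOuter v).card := by
      rw [Finset.card_eq_sum_card_fiberwise
        (f := c) (t := Finset.univ) (fun v _ => Finset.mem_univ _)]
      refine Finset.sum_congr rfl fun b _ => ?_
      unfold nIn
      rw [Finset.filter_filter]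
      congr 1
      ext v
      simp [and_comm]
    have e : {v : PathVertex d // ¬ IsOuter v}
        ≃ Σ s : Fin r, {t : Fin (d s + 1) // ¬ IsOuter (⟨s, t⟩ : PathVertex d)} :=
      { toFun := fun v => ⟨v.1.1, v.1.2, v.2⟩
        invFun := fun x => ⟨⟨x.1, x.2.1⟩, x.2.2⟩
        left_inv := fun v => rfl
        right_inv := fun x => rfl }
    have h2 : (Finset.univ.filter fun v : PathVertex d => ¬ IsOuter v).card
        = ∑ s, (d s - 1) := by
      rw [← Fintype.card_subtype, Fintype.card_congr e, Fintype.card_sigma]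
      refine Finset.sum_congr rfl fun s _ => ?_
      rw [Fintype.card_subtype]
      have hf : (Finset.univ.filter fun t : Fin (d s + 1) => IsOuter (⟨s, t⟩ : PathVertex d))
          = {0, Fin.last (d s)} := by
        ext t
        rw [Finset.mem_filter]
        simp [IsOuter]
      rw [Finset.filter_not, Finset.card_sdiff_of_subset (Finset.filter_subset _ _), hf]
      have h0 : (0 : Fin (d s + 1)) ≠ Fin.last (d s) := by
        have := hd s
        simp only [Fin.ext_iff, Fin.last, Fin.val_zero, ne_eq]
        omega
      rw [Finset.card_insert_of_notMem (by simp [h0]), Finset.card_singleton]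
      simp
    have h3 : ∑ s, d s = ∑ s, (d s - 1) + r := by
      calc ∑ s, d s = ∑ s, (d s - 1 + 1) :=
            Finset.sum_congr rfl fun s _ => (Nat.sub_add_cancel (hd s)).symm
        _ = ∑ s, (d s - 1) + ∑ _s : Fin r, 1 := Finset.sum_add_distrib
        _ = ∑ s, (d s - 1) + r := by simp
    rw [h1, h2, h3]
  set S1 := Finset.univ.filter fun b : β => nOut c b = 1 ∧ nIn c b = 1 with hS1
  set S2 := Finset.univ.filter fun b : β => nOut c b = 1 ∧ 2 ≤ nIn c b with hS2
  set S3 := Finset.univ.filter fun b : β => nOut c b = 0 ∧ nIn c b = 1 with hS3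
  set S4 := Finset.univ.filter fun b : β => nOut c b = 0 ∧ 2 ≤ nIn c b with hS4
  have d12 : Disjoint S1 S2 := by
    rw [Finset.disjoint_left]; intro b h1 h2
    simp only [hS1, hS2, Finset.mem_filter] at h1 h2; omega
  have d34 : Disjoint S3 S4 := by
    rw [Finset.disjoint_left]; intro b h1 h2
    simp only [hS3, hS4, Finset.mem_filter] at h1 h2; omega
  have d13 : Disjoint (S1 ∪ S2) (S3 ∪ S4) := by
    rw [Finset.disjoint_left]; intro b h1 h2
    simp only [hS1, hS2, hS3, hS4, Finset.mem_union, Finset.mem_filter] at h1 h2; omega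
  have hA : (Finset.univ.filter fun b : β => nOut c b = 1 ∧ 1 ≤ nIn c b) = S1 ∪ S2 := by
    ext b
    simp only [hS1, hS2, Finset.mem_union, Finset.mem_filter, Finset.mem_univ, true_and]
    omega
  have hB : (Finset.univ.filter fun b : β => nOut c b = 0 ∧ 1 ≤ nIn c b) = S3 ∪ S4 := by
    ext b
    simp only [hS3, hS4, Finset.mem_union, Finset.mem_filter, Finset.mem_univ, true_and]
    omega
  -- key counting inequality
  have key : S1.card + 2 * S2.card + S3.card + 2 * S4.card ≤ ∑ b : β, nIn c b := by
    have hsub : ∑ b ∈ (S1 ∪ S2) ∪ (S3 ∪ S4), nIn c b ≤ ∑ b : β, nIn c b :=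
      Finset.sum_le_sum_of_subset (Finset.subset_univ _)
    rw [Finset.sum_union d13, Finset.sum_union d12, Finset.sum_union d34] at hsub
    have b1 : S1.card ≤ ∑ b ∈ S1, nIn c b := by
      calc S1.card = S1.card • 1 := by simp
        _ ≤ ∑ b ∈ S1, nIn c b := Finset.card_nsmul_le_sum _ _ _ fun b hb => by
            simp only [hS1, Finset.mem_filter] at hb; omega
    have b2 : 2 * S2.card ≤ ∑ b ∈ S2, nIn c b := by
      calc 2 * S2.card = S2.card • 2 := by ring
        _ ≤ ∑ b ∈ S2, nIn c b := Finset.card_nsmul_le_sum _ _ _ fun b hb => by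
            simp only [hS2, Finset.mem_filter] at hb; omega
    have b3 : S3.card ≤ ∑ b ∈ S3, nIn c b := by
      calc S3.card = S3.card • 1 := by simp
        _ ≤ ∑ b ∈ S3, nIn c b := Finset.card_nsmul_le_sum _ _ _ fun b hb => by
            simp only [hS3, Finset.mem_filter] at hb; omega
    have b4 : 2 * S4.card ≤ ∑ b ∈ S4, nIn c b := by
      calc 2 * S4.card = S4.card • 2 := by ring
        _ ≤ ∑ b ∈ S4, nIn c b := Finset.card_nsmul_le_sum _ _ _ fun b hb => by
            simp only [hS4, Finset.mem_filter] at hb; omega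
    omega
  rw [hA, hB, Finset.card_union_of_disjoint d12, Finset.card_union_of_disjoint d34]
  have hcase' : S3.card ≤ S2.card := hcase
  have final : (S1.card + S2.card) + 2 * (S3.card + S4.card) + r ≤ ∑ s, d s := by omega
  have final' : ((S1.card + S2.card : ℕ) : ℚ) + 2 * ((S3.card + S4.card : ℕ) : ℚ) + (r : ℚ)
      ≤ ((∑ s, d s : ℕ) : ℚ) := by exact_mod_cast final
  push_cast at final' ⊢
  linarith
end

section
/- The measure μ_θ(dx) = (1/2π)·1_{|x|≤2σ}·√(4σ²−x²)/(θ²+σ²−θx) dx + 1_{|θ|>σ}·(1−σ²/θ²)·δ_{θ+σ²/θ}(dx) is a probability measure for every θ ≠ 0 and σ > 0. -/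
open MeasureTheory Real
open scoped ENNReal Topology

lemma deriv_aux (A B : ℝ) (h : |B| < A) (t : ℝ) (ht : t ∈ Set.Ico 0 π) :
    HasDerivAt (fun u => (2 / Real.sqrt (A^2 - B^2)) *
        Real.arctan (Real.sqrt ((A+B)/(A-B)) * Real.tan (u/2)))
      ((A - B * Real.cos t)⁻¹) t := by
  have hAB1 : 0 < A - B := by rcases abs_lt.1 h with ⟨h1, h2⟩; linarith
  have hAB2 : 0 < A + B := by rcases abs_lt.1 h with ⟨h1, h2⟩; linarith
  set s := Real.sqrt (A^2 - B^2) with hs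
  set k := Real.sqrt ((A+B)/(A-B)) with hk
  have hsq : A^2 - B^2 = (A-B)*(A+B) := by ring
  have hspos : 0 < s := by
    rw [hs]; apply Real.sqrt_pos.2; rw [hsq]; positivity
  have hkpos : 0 < k := by
    rw [hk]; apply Real.sqrt_pos.2; positivity
  have hc : 0 < Real.cos (t/2) := by
    apply Real.cos_pos_of_mem_Ioo
    constructor
    · linarith [ht.1, Real.pi_pos]
    · linarith [ht.2]
  have h1 : HasDerivAt (fun u : ℝ => Real.tan (u/2)) (1 / Real.cos (t/2)^2 * (1/2)) t :=
    HasDerivAt.comp (h₂ := Real.tan) t (Real.hasDerivAt_tan hc.ne') ((hasDerivAt_id t).div_const 2)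
  have h2 : HasDerivAt (fun u : ℝ => k * Real.tan (u/2)) (k * (1 / Real.cos (t/2)^2 * (1/2))) t :=
    h1.const_mul k
  have h3 := ((Real.hasDerivAt_arctan (k * Real.tan (t/2))).comp t h2).const_mul (2/s)
  refine h3.congr_deriv (Eq.symm ?_)
  have hcos : Real.cos t = Real.cos (t/2)^2 - Real.sin (t/2)^2 := by
    rw [show t = 2 * (t/2) by ring, Real.cos_two_mul']
    rw [show 2*(t/2)/2 = t/2 by ring]
  have hpy : Real.sin (t/2)^2 + Real.cos (t/2)^2 = 1 := Real.sin_sq_add_cos_sq _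
  have hk2 : k^2 = (A+B)/(A-B) := Real.sq_sqrt (by positivity)
  have htan : Real.tan (t/2) = Real.sin (t/2) / Real.cos (t/2) := Real.tan_eq_sin_div_cos _
  have hks : k * (A - B) = s := by
    rw [hk, hs, hsq, show A - B = Real.sqrt ((A-B)^2) from (Real.sqrt_sq hAB1.le).symm,
      ← Real.sqrt_mul (by positivity)]
    congr 1
    rw [Real.sqrt_sq hAB1.le]
    field_simp
  have hD : 0 < A - B * Real.cos t := by
    have h1' : B * Real.cos t ≤ |B| := by
      calc B * Real.cos t ≤ |B * Real.cos t| := le_abs_self _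
        _ = |B| * |Real.cos t| := abs_mul _ _
        _ ≤ |B| * 1 := by
            have := Real.abs_cos_le_one t
            nlinarith [abs_nonneg B]
        _ = |B| := mul_one _
    linarith
  have hk2' : k^2 * (A - B) = A + B := by
    rw [hk2]; field_simp
  have e1 : 1 + (k * Real.tan (t/2))^2 = (A - B*Real.cos t) / ((A-B) * Real.cos (t/2)^2) := by
    rw [htan, hcos, eq_div_iff (by positivity : ((A-B) * Real.cos (t/2)^2) ≠ (0:ℝ))]
    have hX : Real.cos (t/2)^2 * (Real.cos (t/2)^2)⁻¹ = 1 := mul_inv_cancel₀ (by positivity)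
    linear_combination (Real.sin (t/2)^2 * (Real.cos (t/2)^2 * (Real.cos (t/2)^2)⁻¹)) * hk2' + ((A+B) * Real.sin (t/2)^2) * hX + A * hpy
  rw [e1]
  have e2 : (2/s) * (1/((A - B*Real.cos t)/((A-B)*Real.cos (t/2)^2)) * (k * (1/Real.cos (t/2)^2 * (1/2)))) = (k*(A-B))/(s*(A-B*Real.cos t)) := by
    field_simp
  rw [eq_comm, e2, hks, div_eq_iff (by positivity : s*(A-B*Real.cos t) ≠ 0)]
  field_simp

lemma int_inv_aux (A B : ℝ) (h : |B| < A) :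
    ∫ t in (0:ℝ)..π, (A - B * Real.cos t)⁻¹ = π / Real.sqrt (A^2 - B^2) := by
  have hAB1 : 0 < A - B := by rcases abs_lt.1 h with ⟨h1, h2⟩; linarith
  have hAB2 : 0 < A + B := by rcases abs_lt.1 h with ⟨h1, h2⟩; linarith
  set s := Real.sqrt (A^2 - B^2) with hs
  set k := Real.sqrt ((A+B)/(A-B)) with hk
  have hspos : 0 < s := by
    rw [hs]; apply Real.sqrt_pos.2; nlinarith
  have hkpos : 0 < k := by
    rw [hk]; apply Real.sqrt_pos.2; positivity
  have hD : ∀ t : ℝ, 0 < A - B * Real.cos t := by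
    intro t
    have h1' : B * Real.cos t ≤ |B| := by
      calc B * Real.cos t ≤ |B * Real.cos t| := le_abs_self _
        _ = |B| * |Real.cos t| := abs_mul _ _
        _ ≤ |B| * 1 := by
            have := Real.abs_cos_le_one t
            nlinarith [abs_nonneg B]
        _ = |B| := mul_one _
    linarith
  have cont : Continuous fun t : ℝ => (A - B * Real.cos t)⁻¹ := by
    apply Continuous.inv₀
    · exact continuous_const.sub (continuous_const.mul Real.continuous_cos)
    · exact fun t => (hD t).ne'
  set F : ℝ → ℝ := fun t => (2 / s) * Real.arctan (k * Real.tan (t/2)) with hF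
  set G : ℝ → ℝ := fun T => ∫ t in (0:ℝ)..T, (A - B * Real.cos t)⁻¹ with hG
  have hint : ∀ a b : ℝ, IntervalIntegrable (fun t => (A - B * Real.cos t)⁻¹) volume a b :=
    fun a b => cont.intervalIntegrable a b
  have hGF : ∀ T ∈ Set.Ico (0:ℝ) π, G T = F T := by
    intro T hT
    have : ∀ t ∈ Set.uIcc (0:ℝ) T, HasDerivAt F ((A - B * Real.cos t)⁻¹) t := by
      intro t ht
      rw [Set.uIcc_of_le hT.1] at ht
      exact deriv_aux A B h t ⟨ht.1, lt_of_le_of_lt ht.2 hT.2⟩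
    show (∫ t in (0:ℝ)..T, (A - B * Real.cos t)⁻¹) = F T
    rw [intervalIntegral.integral_eq_sub_of_hasDerivAt this (hint 0 T)]
    simp [hF, Real.tan_zero, Real.arctan_zero]
  have hGcont : Continuous G := intervalIntegral.continuous_primitive hint 0
  have hne : (𝓝[<] π).NeBot := nhdsLT_neBot π
  have h1 : Filter.Tendsto G (𝓝[<] π) (𝓝 (G π)) :=
    (hGcont.tendsto π).mono_left nhdsWithin_le_nhds
  have h2 : Filter.Tendsto F (𝓝[<] π) (𝓝 (π / s)) := by
    have ht2 : Filter.Tendsto (fun T : ℝ => T/2) (𝓝[<] π) (𝓝[<] (π/2)) := by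
      rw [tendsto_nhdsWithin_iff]
      constructor
      · exact ((continuous_id.div_const 2).tendsto π).mono_left nhdsWithin_le_nhds
      · filter_upwards [self_mem_nhdsWithin] with x hx
        simp only [Set.mem_Iio] at hx ⊢
        linarith
    have ht3 : Filter.Tendsto (fun T : ℝ => Real.tan (T/2)) (𝓝[<] π) Filter.atTop :=
      Real.tendsto_tan_pi_div_two.comp ht2
    have ht4 : Filter.Tendsto (fun T : ℝ => k * Real.tan (T/2)) (𝓝[<] π) Filter.atTop :=
      ht3.const_mul_atTop hkpos
    have ht5 : Filter.Tendsto (fun T : ℝ => Real.arctan (k * Real.tan (T/2))) (𝓝[<] π)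
        (𝓝 (π/2)) :=
      (tendsto_nhds_of_tendsto_nhdsWithin Real.tendsto_arctan_atTop).comp ht4
    have := ht5.const_mul (2/s)
    have heq : (2/s) * (π/2) = π / s := by field_simp
    rw [heq] at this
    exact this
  have h3 : Filter.Tendsto G (𝓝[<] π) (𝓝 (π / s)) := by
    apply h2.congr'
    filter_upwards [Ioo_mem_nhdsLT Real.pi_pos] with T hT
    exact (hGF T ⟨hT.1.le, hT.2⟩).symm
  exact tendsto_nhds_unique h1 h3

lemma denom_pos (A B : ℝ) (h : |B| < A) (t : ℝ) : 0 < A - B * Real.cos t := by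
  have h1' : B * Real.cos t ≤ |B| := by
    calc B * Real.cos t ≤ |B * Real.cos t| := le_abs_self _
      _ = |B| * |Real.cos t| := abs_mul _ _
      _ ≤ |B| * 1 := by
          have := Real.abs_cos_le_one t
          nlinarith [abs_nonneg B]
      _ = |B| := mul_one _
  linarith

lemma int_sinsq (A B : ℝ) (hB : B ≠ 0) (h : |B| < A) :
    ∫ t in (0:ℝ)..π, Real.sin t^2 * (A - B * Real.cos t)⁻¹
      = π * (A - Real.sqrt (A^2 - B^2)) / B^2 := by
  have hA : 0 < A := lt_of_le_of_lt (abs_nonneg B) h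
  have hsq : (0:ℝ) ≤ A^2 - B^2 := by nlinarith [sq_abs B, abs_nonneg B]
  have hs2 : (Real.sqrt (A^2 - B^2))^2 = A^2 - B^2 := Real.sq_sqrt hsq
  have hident : (fun t => Real.sin t^2 * (A - B*Real.cos t)⁻¹)
      = fun t => (Real.cos t * B⁻¹ + A/B^2) + (1 - A^2/B^2) * (A - B*Real.cos t)⁻¹ := by
    funext t
    have h1 : A - B*Real.cos t ≠ 0 := (denom_pos A B h t).ne'
    have hD : (A - B*Real.cos t) * (A - B*Real.cos t)⁻¹ = 1 := mul_inv_cancel₀ h1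
    have hB' : B * B⁻¹ = 1 := mul_inv_cancel₀ hB
    rw [Real.sin_sq]
    linear_combination (B⁻¹*(A*B⁻¹ + Real.cos t)) * hD + ((A - B*Real.cos t)⁻¹ * Real.cos t * (A*B⁻¹ + Real.cos t)) * hB'
  have contD : Continuous fun t : ℝ => (A - B * Real.cos t)⁻¹ := by
    apply Continuous.inv₀
    · exact continuous_const.sub (continuous_const.mul Real.continuous_cos)
    · exact fun t => (denom_pos A B h t).ne'
  have hi1 : IntervalIntegrable (fun t => Real.cos t * B⁻¹ + A/B^2) volume 0 π :=
    ((Real.continuous_cos.mul continuous_const).add continuous_const).intervalIntegrable 0 π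
  have hi2 : IntervalIntegrable (fun t => (1 - A^2/B^2) * (A - B*Real.cos t)⁻¹) volume 0 π :=
    (continuous_const.mul contD).intervalIntegrable 0 π
  rw [hident, intervalIntegral.integral_add hi1 hi2,
    intervalIntegral.integral_add (f := fun t => Real.cos t * B⁻¹) (g := fun _ => A/B^2)
      ((Real.continuous_cos.mul continuous_const).intervalIntegrable 0 π)
      (continuous_const.intervalIntegrable 0 π),
    intervalIntegral.integral_mul_const, integral_cos, intervalIntegral.integral_const,
    intervalIntegral.integral_const_mul, int_inv_aux A B h]
  simp only [Real.sin_pi, Real.sin_zero, sub_zero, smul_eq_mul, zero_mul]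
  have hsne : Real.sqrt (A^2 - B^2) ≠ 0 ∨ True := Or.inr trivial
  rcases eq_or_lt_of_le hsq with heq | hlt
  · exfalso
    have : B^2 < A^2 := by nlinarith [sq_abs B, abs_nonneg B]
    nlinarith
  · have hspos : 0 < Real.sqrt (A^2 - B^2) := Real.sqrt_pos.2 hlt
    field_simp
    linear_combination π * hs2

lemma int_h (σ θ : ℝ) (hσ : 0 < σ) (hθ : θ ≠ 0) :
    IntegrableOn (fun t => (2*σ*Real.sin t)^2 / (2*π*((θ^2+σ^2) - (2*σ*θ)*Real.cos t)))
      (Set.Icc 0 π) volume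
  ∧ ∫ t in Set.Icc 0 π, (2*σ*Real.sin t)^2 / (2*π*((θ^2+σ^2) - (2*σ*θ)*Real.cos t))
      = if σ < |θ| then σ^2/θ^2 else 1 := by
  set A := θ^2 + σ^2 with hA
  set B := 2*σ*θ with hB
  have habsB : |B| = 2*σ*|θ| := by
    rw [hB, abs_mul, abs_of_nonneg (by positivity : (0:ℝ) ≤ 2*σ)]
  by_cases hcase : |θ| = σ
  · -- boundary case
    have hπ : (0:ℝ) < π := Real.pi_pos
    rcases abs_eq hσ.le |>.1 hcase with hθσ | hθσ
    · -- θ = σ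
      have hae : ∀ᵐ t ∂(volume.restrict (Set.Icc 0 π)),
          (2*σ*Real.sin t)^2 / (2*π*(A - B*Real.cos t)) = (1 + Real.cos t)/π := by
        rw [ae_restrict_iff' measurableSet_Icc]
        have hnull : (volume : Measure ℝ) {0} = 0 := measure_singleton 0
        filter_upwards [measure_eq_zero_iff_ae_notMem.1 hnull] with t ht0 ht
        simp only [Set.mem_singleton_iff] at ht0
        have hlt : Real.cos t < 1 := by
          have := Real.strictAntiOn_cos (Set.left_mem_Icc.2 hπ.le) ht
            (lt_of_le_of_ne ht.1 (Ne.symm ht0))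
          simpa using this
        have hden : A - B*Real.cos t = 2*σ^2*(1 - Real.cos t) := by
          rw [hA, hB, hθσ]; ring
        have hpos : 0 < 2*π*(2*σ^2*(1 - Real.cos t)) := by
          apply mul_pos (by positivity)
          exact mul_pos (by positivity) (by linarith)
        rw [hden, div_eq_div_iff hpos.ne' hπ.ne']
        linear_combination (4*σ^2*π) * (Real.sin_sq_add_cos_sq t)
      have hcont : Continuous fun t : ℝ => (1 + Real.cos t)/π :=
        (continuous_const.add Real.continuous_cos).div_const π
      have hint : IntegrableOn (fun t => (2*σ*Real.sin t)^2 / (2*π*(A - B*Real.cos t)))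
          (Set.Icc 0 π) volume :=
        (hcont.integrableOn_Icc).congr (hae.mono fun t h => h.symm)
      refine ⟨hint, ?_⟩
      rw [setIntegral_congr_ae measurableSet_Icc ((ae_restrict_iff' measurableSet_Icc).1 hae)]
      have : ∫ t in Set.Icc 0 π, (1 + Real.cos t)/π = ∫ t in (0:ℝ)..π, (1 + Real.cos t)/π := by
        rw [intervalIntegral.integral_of_le hπ.le, integral_Icc_eq_integral_Ioc]
      rw [this, if_neg (by rw [hcase]; exact lt_irrefl σ)]
      rw [intervalIntegral.integral_div, intervalIntegral.integral_add
        (continuous_const.intervalIntegrable 0 π) (Real.continuous_cos.intervalIntegrable 0 π),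
        intervalIntegral.integral_const, integral_cos]
      simp [hπ.ne']
    · -- θ = -σ
      have hae : ∀ᵐ t ∂(volume.restrict (Set.Icc 0 π)),
          (2*σ*Real.sin t)^2 / (2*π*(A - B*Real.cos t)) = (1 - Real.cos t)/π := by
        rw [ae_restrict_iff' measurableSet_Icc]
        have hnull : (volume : Measure ℝ) {π} = 0 := measure_singleton π
        filter_upwards [measure_eq_zero_iff_ae_notMem.1 hnull] with t ht0 ht
        simp only [Set.mem_singleton_iff] at ht0
        have hlt : -1 < Real.cos t := by
          have := Real.strictAntiOn_cos ht (Set.right_mem_Icc.2 hπ.le)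
            (lt_of_le_of_ne ht.2 ht0)
          simpa using this
        have hden : A - B*Real.cos t = 2*σ^2*(1 + Real.cos t) := by
          rw [hA, hB, hθσ]; ring
        have hpos : 0 < 2*π*(2*σ^2*(1 + Real.cos t)) := by
          apply mul_pos (by positivity)
          exact mul_pos (by positivity) (by linarith)
        rw [hden, div_eq_div_iff hpos.ne' hπ.ne']
        linear_combination (4*σ^2*π) * (Real.sin_sq_add_cos_sq t)
      have hcont : Continuous fun t : ℝ => (1 - Real.cos t)/π :=
        (continuous_const.sub Real.continuous_cos).div_const π
      have hint : IntegrableOn (fun t => (2*σ*Real.sin t)^2 / (2*π*(A - B*Real.cos t)))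
          (Set.Icc 0 π) volume :=
        (hcont.integrableOn_Icc).congr (hae.mono fun t h => h.symm)
      refine ⟨hint, ?_⟩
      rw [setIntegral_congr_ae measurableSet_Icc ((ae_restrict_iff' measurableSet_Icc).1 hae)]
      have : ∫ t in Set.Icc 0 π, (1 - Real.cos t)/π = ∫ t in (0:ℝ)..π, (1 - Real.cos t)/π := by
        rw [intervalIntegral.integral_of_le hπ.le, integral_Icc_eq_integral_Ioc]
      rw [this, if_neg (by rw [hcase]; exact lt_irrefl σ)]
      rw [intervalIntegral.integral_div, intervalIntegral.integral_sub
        (continuous_const.intervalIntegrable 0 π) (Real.continuous_cos.intervalIntegrable 0 π),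
        intervalIntegral.integral_const, integral_cos]
      simp [hπ.ne']
  · -- generic case
    have hlt : |B| < A := by
      have hne0 : |θ| - σ ≠ 0 := sub_ne_zero.2 hcase
      have h0 : 0 < (|θ| - σ)^2 := by positivity
      rw [habsB, hA]
      nlinarith [sq_abs θ, abs_nonneg θ, h0]
    have hBne : B ≠ 0 := by rw [hB]; positivity
    have hD := denom_pos A B hlt
    have hrw : (fun t => (2*σ*Real.sin t)^2 / (2*π*(A - B*Real.cos t)))
        = fun t => (2*σ^2/π) * (Real.sin t^2 * (A - B*Real.cos t)⁻¹) := by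
      funext t
      have h1 : A - B*Real.cos t ≠ 0 := (hD t).ne'
      field_simp
    have hcont : Continuous fun t : ℝ => (2*σ^2/π) * (Real.sin t^2 * (A - B*Real.cos t)⁻¹) := by
      apply continuous_const.mul
      apply Continuous.mul (Real.continuous_sin.pow 2)
      apply Continuous.inv₀
      · exact continuous_const.sub (continuous_const.mul Real.continuous_cos)
      · exact fun t => (hD t).ne'
    rw [hrw]
    refine ⟨hcont.integrableOn_Icc, ?_⟩
    have : ∫ t in Set.Icc 0 π, (2*σ^2/π) * (Real.sin t^2 * (A - B*Real.cos t)⁻¹)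
        = ∫ t in (0:ℝ)..π, (2*σ^2/π) * (Real.sin t^2 * (A - B*Real.cos t)⁻¹) := by
      rw [intervalIntegral.integral_of_le Real.pi_pos.le, integral_Icc_eq_integral_Ioc]
    rw [this, intervalIntegral.integral_const_mul, int_sinsq A B hBne hlt]
    have hsq : A^2 - B^2 = (θ^2 - σ^2)^2 := by rw [hA, hB]; ring
    rw [hsq, Real.sqrt_sq_eq_abs]
    by_cases hc2 : σ < |θ|
    · rw [if_pos hc2]
      have habs : |θ^2 - σ^2| = θ^2 - σ^2 := by
        rw [abs_of_nonneg]
        nlinarith [sq_abs θ]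
      rw [habs, hA, hB]
      have hθ2 : (0:ℝ) < θ^2 := by positivity
      field_simp
      ring
    · rw [if_neg hc2]
      have hlt2 : |θ| < σ := lt_of_le_of_ne (not_lt.1 hc2) hcase
      have habs : |θ^2 - σ^2| = σ^2 - θ^2 := by
        rw [abs_of_nonpos]
        · ring
        · nlinarith [sq_abs θ, abs_nonneg θ]
      rw [habs, hA, hB]
      field_simp
      ring

lemma mass_ac (σ θ : ℝ) (hσ : 0 < σ) (hθ : θ ≠ 0) :
    ∫⁻ x, ENNReal.ofReal (if |x| ≤ 2 * σ then
        Real.sqrt (4 * σ ^ 2 - x ^ 2) / (2 * Real.pi * (θ ^ 2 + σ ^ 2 - θ * x))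
      else 0)
      = ENNReal.ofReal (if σ < |θ| then σ^2/θ^2 else 1) := by
  set g : ℝ → ℝ := fun x => Real.sqrt (4 * σ ^ 2 - x ^ 2) / (2 * Real.pi * (θ ^ 2 + σ ^ 2 - θ * x))
    with hg
  have hind : (fun x => ENNReal.ofReal (if |x| ≤ 2 * σ then g x else 0))
      = (Set.Icc (-(2*σ)) (2*σ)).indicator (fun x => ENNReal.ofReal (g x)) := by
    funext x
    by_cases hx : |x| ≤ 2*σ
    · rw [if_pos hx, Set.indicator_of_mem (by rw [Set.mem_Icc, ← abs_le]; exact hx)]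
    · rw [if_neg hx, Set.indicator_of_notMem (by rw [Set.mem_Icc, ← abs_le]; exact hx),
        ENNReal.ofReal_zero]
  rw [show (fun x => ENNReal.ofReal (if |x| ≤ 2 * σ then
        Real.sqrt (4 * σ ^ 2 - x ^ 2) / (2 * Real.pi * (θ ^ 2 + σ ^ 2 - θ * x)) else 0))
      = fun x => ENNReal.ofReal (if |x| ≤ 2 * σ then g x else 0) from rfl,
    hind, lintegral_indicator measurableSet_Icc]
  have himg : (fun t => 2*σ*Real.cos t) '' Set.Icc 0 π = Set.Icc (-(2*σ)) (2*σ) := by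
    rw [show (fun t => 2*σ*Real.cos t) = (fun x => 2*σ*x) ∘ Real.cos from rfl, Set.image_comp,
      Real.bijOn_cos.image_eq, Set.image_mul_left_Icc' (by positivity : (0:ℝ) < 2*σ)]
    norm_num
  have hderiv : ∀ t ∈ Set.Icc (0:ℝ) π, HasDerivWithinAt (fun t => 2*σ*Real.cos t)
      (-(2*σ*Real.sin t)) (Set.Icc 0 π) t := by
    intro t _
    have h := ((Real.hasDerivAt_cos t).const_mul (2*σ)).hasDerivWithinAt
      (s := Set.Icc (0:ℝ) π)
    refine h.congr_deriv ?_
    ring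
  have hinj : Set.InjOn (fun t => 2*σ*Real.cos t) (Set.Icc 0 π) := by
    intro a ha b hb hab
    exact Real.injOn_cos ha hb (mul_left_cancel₀ (by positivity : (2*σ:ℝ) ≠ 0) hab)
  have hψ : Set.EqOn (fun t => |(-(2*σ*Real.sin t))| • g (2*σ*Real.cos t))
      (fun t => (2*σ*Real.sin t)^2 / (2*π*((θ^2+σ^2) - (2*σ*θ)*Real.cos t))) (Set.Icc 0 π) := by
    intro t ht
    have hsin : 0 ≤ Real.sin t := Real.sin_nonneg_of_nonneg_of_le_pi ht.1 ht.2
    have h4 : 4*σ^2 - (2*σ*Real.cos t)^2 = (2*σ*Real.sin t)^2 := by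
      linear_combination (-(4*σ^2)) * (Real.sin_sq_add_cos_sq t)
    have hnn : (0:ℝ) ≤ 2*σ*Real.sin t := mul_nonneg (by positivity) hsin
    simp only [smul_eq_mul, abs_neg, hg]
    rw [abs_of_nonneg hnn, show (4:ℝ) * σ ^ 2 - (2*σ*Real.cos t) ^ 2 = (2*σ*Real.sin t)^2 from h4,
      Real.sqrt_sq hnn,
      show θ^2+σ^2-θ*(2*σ*Real.cos t) = (θ^2+σ^2) - (2*σ*θ)*Real.cos t by ring]
    ring
  obtain ⟨hint, hval⟩ := int_h σ θ hσ hθ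
  have hint2 : IntegrableOn g (Set.Icc (-(2*σ)) (2*σ)) volume := by
    rw [← himg, integrableOn_image_iff_integrableOn_abs_deriv_smul measurableSet_Icc hderiv hinj]
    exact (integrableOn_congr_fun hψ measurableSet_Icc).2 hint
  have hgnn : ∀ x ∈ Set.Icc (-(2*σ)) (2*σ), 0 ≤ g x := by
    intro x hx
    rw [Set.mem_Icc, ← abs_le] at hx
    have h1 : θ * x ≤ |θ| * (2*σ) := by
      calc θ * x ≤ |θ * x| := le_abs_self _
        _ = |θ| * |x| := abs_mul _ _
        _ ≤ |θ| * (2*σ) := by nlinarith [abs_nonneg θ]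
    have h2 : 0 ≤ θ^2 + σ^2 - θ*x := by nlinarith [sq_abs θ, sq_nonneg (|θ| - σ)]
    exact div_nonneg (Real.sqrt_nonneg _) (by nlinarith [Real.pi_pos])
  rw [← ofReal_integral_eq_lintegral_ofReal hint2
    ((ae_restrict_iff' measurableSet_Icc).2 (Filter.Eventually.of_forall fun x =>
      fun hx => hgnn x hx))]
  congr 1
  rw [← himg, integral_image_eq_integral_abs_deriv_smul measurableSet_Icc hderiv hinj g,
    setIntegral_congr_fun measurableSet_Icc hψ, hval]

/-- The measure
`μ_θ(dx) = (1/2π) 1_{|x|≤2σ} √(4σ²−x²)/(θ²+σ²−θx) dx + 1_{|θ|>σ} (1−σ²/θ²) δ_{θ+σ²/θ}(dx)`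
is a probability measure for every `θ ≠ 0` and `σ > 0`. -/
theorem mu_theta_isProbabilityMeasure (σ θ : ℝ) (hσ : 0 < σ) (hθ : θ ≠ 0) :
    IsProbabilityMeasure
      ((volume.withDensity fun x =>
          ENNReal.ofReal (if |x| ≤ 2 * σ then
            Real.sqrt (4 * σ ^ 2 - x ^ 2) / (2 * Real.pi * (θ ^ 2 + σ ^ 2 - θ * x))
          else 0)) +
        (if σ < |θ| then
          ENNReal.ofReal (1 - σ ^ 2 / θ ^ 2) • Measure.dirac (θ + σ ^ 2 / θ)
        else 0)) := by
  constructor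
  rw [Measure.add_apply, withDensity_apply _ MeasurableSet.univ, Measure.restrict_univ,
    mass_ac σ θ hσ hθ]
  by_cases hc : σ < |θ|
  · rw [if_pos hc, if_pos hc, Measure.smul_apply, Measure.dirac_apply_of_mem (Set.mem_univ _)]
    have h1 : (0:ℝ) ≤ σ^2/θ^2 := by positivity
    have h2 : (0:ℝ) ≤ 1 - σ^2/θ^2 := by
      have : σ^2 < θ^2 := by nlinarith [sq_abs θ, abs_nonneg θ]
      have hθ2 : (0:ℝ) < θ^2 := by positivity
      rw [sub_nonneg, div_le_one hθ2]
      linarith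
    rw [smul_eq_mul, mul_one, ← ENNReal.ofReal_add h1 h2]
    norm_num
  · rw [if_neg hc, if_neg hc]
    simp
end
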